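/- arXiv:2111.08075 — 4 statements merged into one kernel-verified Lean document; each statement's English description precedes it below -/
import Mathlib

section
/- Let n ≥ 1 and let P = {p_1 > p_2 > ⋯ > p_k} be any subset of [n], listed in decreasing order, with the conventions p_0 = n + 1 and p_{k+1} = 1. Then the number of decorated Motzkin walks is |M_n(P)| = 2^{n−k} · Σ_{r ∈ R_k} Π_{t=0}^{k} (r_t + 1)^{p_t − p_{t+1}}. -/
/-- Height after `t` steps of the ±1 walk whose up-steps are recorded by `ε`. -/
def ht (k : ℕ) (ε : Fin k → Bool) (t : ℕ) : ℤ :=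
  ∑ s ∈ Finset.univ.filter (fun s : Fin k => (s : ℕ) < t),
    (if ε s then (1 : ℤ) else -1)

/-- Height of the walk with step slopes `d` after the first `q` steps. -/
def hgt (n : ℕ) (d : Fin n → ℤ) (q : ℕ) : ℤ :=
  ∑ s ∈ Finset.univ.filter (fun s : Fin n => (s : ℕ) < q), d s

/-- The set of decorated Motzkin walks `M_n(P)`.  A decorated walk is given by the slopes
`d q ∈ {1, -1, 0}` of its steps (read left to right; the step at 0-indexed position `q`
is numbered `n - q`, so that steps are numbered `1, …, n` from right to left), together
with a numeric label `ℓ q ∈ {1, …, h + 1}` (`h` being the height at which the step starts)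
and a left/right mark (`false`/`true`) for each step.  Steps numbered by elements of `P`
must be up or down steps, all other steps are horizontal; every step starts weakly above
the x-axis; down steps are marked left (`false`) and up steps are marked right (`true`). -/
def decoratedMotzkin (n : ℕ) (P : Finset ℕ) :
    Set ((Fin n → ℤ) × (Fin n → ℕ) × (Fin n → Bool)) :=
  {w | (∀ q : Fin n,
          if n - (q : ℕ) ∈ P then w.1 q = 1 ∨ w.1 q = -1 else w.1 q = 0) ∧
       (∀ q : Fin n, 0 ≤ hgt n w.1 (q : ℕ)) ∧
       (∀ q : Fin n, 1 ≤ w.2.1 q ∧ (w.2.1 q : ℤ) ≤ hgt n w.1 (q : ℕ) + 1) ∧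
       (∀ q : Fin n, (w.1 q = 1 → w.2.2 q = true) ∧ (w.1 q = -1 → w.2.2 q = false))}


/-!
A decorated walk is its sequence of up/down choices `ε : Fin k → Bool` on the steps numbered by
`P`, together with a free choice of a label for every step and of a mark for every horizontal
step; the label condition already forces each step to start at height `≥ 0`. Every step numbered
in `[p (m + 1), p m)` starts at the height `ht k ε m` of the underlying ±1 walk, so the labels
contribute `∏ m, (ht k ε m + 1) ^ (p m - p (m + 1))` and the marks `2 ^ (n - k)`. If the ±1 walk
goes negative before its last step, it first does so at height `-1` on a block of positive
length, so its term vanishes; what remains is the sum over `R_k`.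
-/

open Finset Function

theorem sum_extend_zero {ι α M : Type*} [Fintype ι] [DecidableEq α] [AddCommMonoid M]
    {f : ι → α} (hf : Injective f) (g : ι → M) (s : Finset α) :
    ∑ a ∈ s, extend f g (0 : α → M) a = ∑ i with f i ∈ s, g i := by
  calc ∑ a ∈ s, extend f g (0 : α → M) a
      = ∑ a ∈ (univ.filter fun i => f i ∈ s).image f, extend f g 0 a := by
        refine (sum_subset (fun a ha => ?_) fun a ha hna => extend_apply' g (0 : α → M) a ?_).symm
        · obtain ⟨i, hi, rfl⟩ := mem_image.1 ha
          exact (mem_filter.1 hi).2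
        · rintro ⟨i, rfl⟩
          exact hna (mem_image_of_mem f (mem_filter.2 ⟨mem_univ i, ha⟩))
    _ = ∑ i with f i ∈ s, g i := by
        rw [sum_image fun i _ j _ h => hf h]
        exact sum_congr rfl fun i _ => hf.extend_apply g 0 i

@[to_additive]
theorem prod_fin_filter_lt_sub_eq_prod_Ico {M : Type*} [CommMonoid M] (g : ℕ → M) {n q : ℕ}
    (hq : q ≤ n) :
    ∏ s ∈ univ.filter (fun s : Fin n => (s : ℕ) < q), g (n - s) =
      ∏ j ∈ Ico (n - q + 1) (n + 1), g j := by
  have himage : (univ.filter fun s : Fin n => (s : ℕ) < q).image (fun s : Fin n => n - (s : ℕ)) =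
      Ico (n - q + 1) (n + 1) := by
    ext j
    simp only [mem_image, mem_filter, mem_univ, true_and, mem_Ico]
    constructor
    · rintro ⟨s, hs, rfl⟩
      omega
    · intro hj
      exact ⟨⟨n - j, by omega⟩, by simp only; omega, by simp only; omega⟩
  rw [← himage, prod_image fun a _ b _ h => Fin.ext (by have := a.2; have := b.2; omega)]

theorem prod_fin_sub_eq_prod_Ico {M : Type*} [CommMonoid M] (g : ℕ → M) (n : ℕ) :
    ∏ q : Fin n, g (n - q) = ∏ j ∈ Ico 1 (n + 1), g j := by
  simpa using prod_fin_filter_lt_sub_eq_prod_Ico g (le_refl n)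

theorem prod_Ico_eq_prod_range_prod_Ico {M : Type*} [CommMonoid M] (g : ℕ → M) {p : ℕ → ℕ}
    {m : ℕ} (hp : AntitoneOn p (Set.Iic m)) :
    ∏ j ∈ Ico (p m) (p 0), g j = ∏ i ∈ range m, ∏ j ∈ Ico (p (i + 1)) (p i), g j := by
  induction m with
  | zero => simp
  | succ m ih =>
    have hm : p (m + 1) ≤ p m := hp (by simp) (by simp) (by omega)
    have h0 : p m ≤ p 0 := hp (by simp) (by simp) (by omega)
    rw [prod_range_succ, ← ih (hp.mono (Set.Iic_subset_Iic.2 m.le_succ)), mul_comm,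
      prod_Ico_consecutive g hm h0]

theorem ncard_setOf_mem_pi {α ι β γ : Type*} [Fintype ι] [DecidableEq ι] (D : Finset α)
    (L : α → ι → Finset β) (M : α → ι → Finset γ) :
    {w : α × (ι → β) × (ι → γ) |
        w.1 ∈ D ∧ (∀ i, w.2.1 i ∈ L w.1 i) ∧ ∀ i, w.2.2 i ∈ M w.1 i}.ncard =
      ∑ a ∈ D, (∏ i, #(L a i)) * ∏ i, #(M a i) := by
  classical
  have hset : {w : α × (ι → β) × (ι → γ) |
      w.1 ∈ D ∧ (∀ i, w.2.1 i ∈ L w.1 i) ∧ ∀ i, w.2.2 i ∈ M w.1 i} =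
      ↑(D.biUnion fun a => {a} ×ˢ Fintype.piFinset (L a) ×ˢ Fintype.piFinset (M a)) := by
    ext ⟨a, ℓ, m⟩
    simp [and_left_comm]
  rw [hset, Set.ncard_coe_finset, card_biUnion]
  · simp [card_product, Fintype.card_piFinset]
  · intro a _ b _ hab
    simp only [Function.onFun, disjoint_left, mem_product, mem_singleton]
    rintro w ⟨rfl, -⟩ ⟨hwb, -⟩
    exact hab hwb

theorem ht_zero {k : ℕ} (ε : Fin k → Bool) : ht k ε 0 = 0 := by
  simp [ht]

theorem ht_succ {k : ℕ} (ε : Fin k → Bool) {t : ℕ} (htk : t < k) :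
    ht k ε (t + 1) = ht k ε t + if ε ⟨t, htk⟩ then 1 else -1 := by
  have hfilter : (univ.filter fun s : Fin k => (s : ℕ) < t + 1) =
      insert ⟨t, htk⟩ (univ.filter fun s : Fin k => (s : ℕ) < t) := by
    ext s
    simp only [mem_filter, mem_univ, true_and, mem_insert, Fin.ext_iff]
    omega
  rw [ht, hfilter, sum_insert (by simp), add_comm, ht]

theorem neg_one_le_ht {k : ℕ} {ε : Fin k → Bool} (h : ∀ t < k, 0 ≤ ht k ε t) :
    -1 ≤ ht k ε k := by
  obtain _ | k := k
  · simp [ht_zero]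
  · rw [ht_succ ε k.lt_succ_self]
    have := h k k.lt_succ_self
    split_ifs <;> omega

theorem exists_ht_eq_neg_one {k : ℕ} {ε : Fin k → Bool} (h : ∃ t < k, ht k ε t < 0) :
    ∃ t < k, ht k ε t = -1 := by
  obtain ⟨hk, hneg⟩ := Nat.find_spec h
  obtain ⟨s, hs⟩ : ∃ s, Nat.find h = s + 1 :=
    Nat.exists_eq_succ_of_ne_zero fun h0 => by simp [h0, ht_zero] at hneg
  have hprev : 0 ≤ ht k ε s := by
    have := Nat.find_min h (show s < Nat.find h by omega)
    push Not at this
    exact this (by omega)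
  rw [hs] at hk hneg
  refine ⟨s + 1, hk, ?_⟩
  rw [ht_succ ε (by omega)] at hneg ⊢
  split_ifs at hneg ⊢ <;> omega

theorem sum_filter_prod_ht_eq_sum_prod_toNat {k : ℕ} (e : ℕ → ℕ) (he : ∀ m < k, e m ≠ 0) :
    ∑ ε ∈ univ.filter (fun ε : Fin k → Bool => (∀ t < k, 0 ≤ ht k ε t) ∧ -1 ≤ ht k ε k),
        ∏ m ∈ range (k + 1), (ht k ε m + 1) ^ e m =
      ∑ ε : Fin k → Bool, ∏ m ∈ range (k + 1), ((ht k ε m + 1).toNat : ℤ) ^ e m := by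
  rw [sum_filter]
  refine sum_congr rfl fun ε _ => ?_
  split_ifs with h
  · refine prod_congr rfl fun m hm => ?_
    have : 0 ≤ ht k ε m + 1 := by
      obtain hmk | rfl := Nat.lt_or_eq_of_le (Nat.lt_succ_iff.1 (mem_range.1 hm))
      · linarith [h.1 m hmk]
      · linarith [h.2]
    rw [Int.toNat_of_nonneg this]
  · obtain ⟨t, htk, hneg⟩ : ∃ t < k, ht k ε t < 0 := by
      by_contra! hall
      exact h ⟨hall, neg_one_le_ht hall⟩
    obtain ⟨t, htk, hval⟩ := exists_ht_eq_neg_one ⟨t, htk, hneg⟩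
    exact (prod_eq_zero (i := t) (mem_range.2 (by omega)) (by simp [hval, he t htk])).symm

-- The step numbered `p (t + 1)` is the `t`-th non-horizontal step from the left; it goes up
-- iff `ε t`.
noncomputable def walkSlopes (n k : ℕ) (p : ℕ → ℕ) (ε : Fin k → Bool) (q : Fin n) : ℤ :=
  extend (fun t : Fin k => p (t + 1)) (fun t => if ε t then 1 else -1) 0 (n - q)

-- The height at which the step numbered `j` starts: the steps to its left carry larger numbers.
def stepHeight (k : ℕ) (p : ℕ → ℕ) (ε : Fin k → Bool) (j : ℕ) : ℤ :=
  ∑ t ∈ univ.filter (fun t : Fin k => j < p (t + 1)), if ε t then 1 else -1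

def marks (x : ℤ) : Finset Bool :=
  univ.filter fun b => (x = 1 → b = true) ∧ (x = -1 → b = false)

theorem card_marks_zero : #(marks 0) = 2 := rfl

theorem card_marks_sign (b : Bool) : #(marks (if b then 1 else -1)) = 1 := by
  cases b <;> rfl

section
variable {n k : ℕ} {p : ℕ → ℕ}

theorem mem_image_Icc_iff {j : ℕ} :
    j ∈ (Icc 1 k).image p ↔ ∃ t : Fin k, p (t + 1) = j := by
  simp only [mem_image, mem_Icc]
  constructor
  · rintro ⟨s, ⟨hs1, hsk⟩, rfl⟩
    exact ⟨⟨s - 1, by omega⟩, by rw [Nat.sub_add_cancel hs1]⟩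
  · rintro ⟨t, rfl⟩
    exact ⟨t + 1, ⟨by omega, t.2⟩, rfl⟩

theorem val_add_one_mem_Icc (t : Fin k) : (t : ℕ) + 1 ∈ Set.Icc 1 k :=
  ⟨Nat.le_add_left 1 t, t.2⟩

theorem walkSlopes_apply_of_forall_ne (ε : Fin k → Bool) {q : Fin n}
    (h : ∀ t : Fin k, p (t + 1) ≠ n - q) : walkSlopes n k p ε q = 0 :=
  extend_apply' _ _ _ fun ⟨t, ht⟩ => h t ht

theorem sub_p_succ_lt (hpn : Set.MapsTo p (Set.Icc 1 k) (Set.Icc 1 n)) (t : Fin k) :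
    n - p (t + 1) < n := by
  obtain ⟨h1, h2⟩ := hpn (val_add_one_mem_Icc t)
  omega

variable (hp : StrictAntiOn p (Set.Icc 1 k))
include hp

theorem injective_p_succ : Injective fun t : Fin k => p (t + 1) := fun s t hst =>
  Fin.ext (Nat.succ_injective (hp.injOn (val_add_one_mem_Icc s) (val_add_one_mem_Icc t) hst))

theorem walkSlopes_apply_of_eq (ε : Fin k → Bool) {q : Fin n} {t : Fin k}
    (ht : p (t + 1) = n - q) : walkSlopes n k p ε q = if ε t then 1 else -1 := by
  rw [walkSlopes, ← ht]
  exact (injective_p_succ hp).extend_apply _ _ t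

theorem stepHeight_eq_ht (ε : Fin k → Bool) {m j : ℕ} (hm : m ≤ k)
    (hj : j ∈ Ico (p (m + 1)) (p m)) : stepHeight k p ε j = ht k ε m := by
  rw [mem_Ico] at hj
  rw [stepHeight, ht]
  refine sum_congr (filter_congr fun t _ => ⟨fun hjt => ?_, fun htm => ?_⟩) fun _ _ => rfl
  · by_contra! hmt
    have := hp.antitoneOn ⟨by omega, by omega⟩ (val_add_one_mem_Icc t) (by omega : m + 1 ≤ t + 1)
    omega
  · have := hp.antitoneOn (val_add_one_mem_Icc t) ⟨by omega, hm⟩ (by omega : (t : ℕ) + 1 ≤ m)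
    omega

variable (hpn : Set.MapsTo p (Set.Icc 1 k) (Set.Icc 1 n))
include hpn

theorem walkSlopes_injective : Injective (walkSlopes n k p) := by
  intro ε ε' h
  funext t
  set q : Fin n := ⟨n - p (t + 1), sub_p_succ_lt hpn t⟩
  have hq : p (t + 1) = n - q := by
    obtain ⟨h1, h2⟩ := hpn (val_add_one_mem_Icc t)
    simp only [q]
    omega
  have := congrFun h q
  rw [walkSlopes_apply_of_eq hp ε hq, walkSlopes_apply_of_eq hp ε' hq] at this
  revert this
  cases ε t <;> cases ε' t <;> simp

theorem exists_walkSlopes_eq_iff (d : Fin n → ℤ) :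
    (∃ ε, walkSlopes n k p ε = d) ↔
      ∀ q : Fin n, if n - (q : ℕ) ∈ (Icc 1 k).image p then d q = 1 ∨ d q = -1 else d q = 0 := by
  simp only [mem_image_Icc_iff]
  constructor
  · rintro ⟨ε, rfl⟩ q
    split_ifs with hq
    · obtain ⟨t, ht⟩ := hq
      rw [walkSlopes_apply_of_eq hp ε ht]
      cases ε t <;> simp
    · exact walkSlopes_apply_of_forall_ne ε (not_exists.1 hq)
  · intro hd
    refine ⟨fun t => decide (d ⟨n - p (t + 1), sub_p_succ_lt hpn t⟩ = 1), funext fun q => ?_⟩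
    have hdq := hd q
    split_ifs at hdq with hq
    · obtain ⟨t, ht⟩ := hq
      have hqt : (⟨n - p (t + 1), sub_p_succ_lt hpn t⟩ : Fin n) = q := Fin.ext (by simp only; omega)
      rw [walkSlopes_apply_of_eq hp _ ht, hqt]
      rcases hdq with h | h <;> simp [h]
    · rw [walkSlopes_apply_of_forall_ne _ (not_exists.1 hq), hdq]

theorem hgt_walkSlopes (ε : Fin k → Bool) (q : Fin n) :
    hgt n (walkSlopes n k p ε) q = stepHeight k p ε (n - q) := by
  simp only [hgt, walkSlopes]
  rw [sum_fin_filter_lt_sub_eq_sum_Ico _ q.2.le, sum_extend_zero (injective_p_succ hp), stepHeight]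
  refine sum_congr (filter_congr fun t _ => ?_) fun _ _ => rfl
  obtain ⟨h1, h2⟩ := hpn (val_add_one_mem_Icc t)
  simp only [mem_Ico]
  omega

theorem p_succ_lt (hp0 : p 0 = n + 1) {m : ℕ} (hm : m < k) : p (m + 1) < p m := by
  rcases Nat.eq_zero_or_pos m with rfl | hm0
  · obtain ⟨-, h⟩ := hpn (⟨le_rfl, hm⟩ : 0 + 1 ∈ Set.Icc 1 k)
    omega
  · exact hp ⟨hm0, hm.le⟩ ⟨by omega, hm⟩ m.lt_succ_self

theorem antitoneOn_Iic_succ (hp0 : p 0 = n + 1) (hpk : p (k + 1) = 1) :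
    AntitoneOn p (Set.Iic (k + 1)) := by
  refine antitoneOn_of_succ_le Set.ordConnected_Iic fun m _ _ hm => ?_
  rw [Order.succ_eq_add_one] at hm ⊢
  rcases Nat.lt_or_eq_of_le (Nat.succ_le_succ_iff.1 hm) with hmk | rfl
  · exact (p_succ_lt hp hpn hp0 hmk).le
  · rcases Nat.eq_zero_or_pos m with rfl | hm0
    · omega
    · obtain ⟨h, -⟩ := hpn (⟨hm0, le_rfl⟩ : m ∈ Set.Icc 1 m)
      omega

theorem prod_toNat_hgt_walkSlopes (hp0 : p 0 = n + 1) (hpk : p (k + 1) = 1)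
    (ε : Fin k → Bool) :
    ∏ q : Fin n, (hgt n (walkSlopes n k p ε) q + 1).toNat =
      ∏ m ∈ range (k + 1), (ht k ε m + 1).toNat ^ (p m - p (m + 1)) := by
  simp only [hgt_walkSlopes hp hpn]
  rw [prod_fin_sub_eq_prod_Ico (fun j => (stepHeight k p ε j + 1).toNat),
    show Ico 1 (n + 1) = Ico (p (k + 1)) (p 0) by rw [hp0, hpk],
    prod_Ico_eq_prod_range_prod_Ico _ (antitoneOn_Iic_succ hp hpn hp0 hpk)]
  refine prod_congr rfl fun m hm => ?_
  have hmk : m ≤ k := Nat.lt_succ_iff.1 (mem_range.1 hm)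
  rw [prod_congr rfl fun j hj => by rw [stepHeight_eq_ht hp ε hmk hj], prod_const, Nat.card_Ico]

theorem prod_card_marks_walkSlopes (ε : Fin k → Bool) :
    ∏ q : Fin n, #(marks (walkSlopes n k p ε q)) = 2 ^ (n - k) := by
  set S := univ.image fun t : Fin k => p (t + 1)
  have hcard : ∀ q : Fin n,
      #(marks (walkSlopes n k p ε q)) = if n - (q : ℕ) ∈ S then 1 else 2 := by
    intro q
    split_ifs with hq
    · obtain ⟨t, -, ht⟩ := mem_image.1 hq
      rw [walkSlopes_apply_of_eq hp ε ht, card_marks_sign]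
    · rw [walkSlopes_apply_of_forall_ne ε fun t ht => hq (mem_image.2 ⟨t, mem_univ t, ht⟩),
        card_marks_zero]
  have hS : S ⊆ Ico 1 (n + 1) := by
    intro j hj
    obtain ⟨t, -, rfl⟩ := mem_image.1 hj
    obtain ⟨h1, h2⟩ := hpn (val_add_one_mem_Icc t)
    simp only [mem_Ico]
    omega
  have hSk : #S = k := by
    rw [card_image_of_injective _ (injective_p_succ hp), card_univ, Fintype.card_fin]
  rw [prod_congr rfl fun q _ => hcard q, prod_fin_sub_eq_prod_Ico (fun j => if j ∈ S then 1 else 2),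
    prod_ite, prod_const_one, one_mul, prod_const, filter_notMem_eq_sdiff,
    card_sdiff_of_subset hS, hSk, Nat.card_Ico, Nat.add_sub_cancel]

theorem decoratedMotzkin_eq :
    decoratedMotzkin n ((Icc 1 k).image p) =
      {w | w.1 ∈ univ.image (walkSlopes n k p) ∧
        (∀ q : Fin n, w.2.1 q ∈ Icc 1 (hgt n w.1 q + 1).toNat) ∧
        ∀ q : Fin n, w.2.2 q ∈ marks (w.1 q)} := by
  ext ⟨d, ℓ, m⟩
  simp only [decoratedMotzkin, Set.mem_ofPred_eq, mem_image, mem_univ, true_and, mem_Icc, marks,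
    mem_filter, exists_walkSlopes_eq_iff hp hpn]
  have hlabel : ∀ q, (1 ≤ ℓ q ∧ ℓ q ≤ (hgt n d q + 1).toNat) ↔
      1 ≤ ℓ q ∧ (ℓ q : ℤ) ≤ hgt n d q + 1 := fun q => by omega
  simp only [hlabel]
  constructor
  · rintro ⟨hd, -, hℓ, hm⟩
    exact ⟨hd, hℓ, hm⟩
  · rintro ⟨hd, hℓ, hm⟩
    exact ⟨hd, fun q => by linarith [(hℓ q).1, (hℓ q).2], hℓ, hm⟩

end

theorem card_decoratedMotzkin_general (n k : ℕ) (P : Finset ℕ)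
    (hP : P ⊆ Finset.Icc 1 n) (p : ℕ → ℕ)
    (hp0 : p 0 = n + 1) (hpk : p (k + 1) = 1)
    (hdec : ∀ s t : ℕ, 1 ≤ s → s < t → t ≤ k → p t < p s)
    (himg : P = (Finset.Icc 1 k).image p) :
    ((decoratedMotzkin n P).ncard : ℤ) =
      2 ^ (n - k) *
        ∑ ε ∈ Finset.univ.filter (fun ε : Fin k → Bool =>
            (∀ t < k, 0 ≤ ht k ε t) ∧ -1 ≤ ht k ε k),
          ∏ t ∈ Finset.range (k + 1), (ht k ε t + 1) ^ (p t - p (t + 1)) := by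
  subst himg
  have hp : StrictAntiOn p (Set.Icc 1 k) := fun s hs t ht hst => hdec s t hs.1 hst ht.2
  have hpn : Set.MapsTo p (Set.Icc 1 k) (Set.Icc 1 n) := fun t ht => by
    simpa using hP (mem_image_of_mem p (by simpa using ht))
  have hexp : ∀ m < k, p m - p (m + 1) ≠ 0 := fun m hm =>
    Nat.sub_ne_zero_of_lt (p_succ_lt hp hpn hp0 hm)
  rw [decoratedMotzkin_eq hp hpn, ncard_setOf_mem_pi _
      (fun d (q : Fin n) => Icc 1 (hgt n d q + 1).toNat) fun d q => marks (d q),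
    sum_image fun ε _ ε' _ h => walkSlopes_injective hp hpn h,
    sum_filter_prod_ht_eq_sum_prod_toNat _ hexp, mul_sum, Nat.cast_sum]
  refine sum_congr rfl fun ε _ => ?_
  simp only [Nat.card_Icc, Nat.add_sub_cancel]
  rw [prod_toNat_hgt_walkSlopes hp hpn hp0 hpk, prod_card_marks_walkSlopes hp hpn, mul_comm]
  push_cast
  rfl

theorem card_decoratedMotzkin (n k : ℕ) (hn : 1 ≤ n) (P : Finset ℕ)
    (hP : P ⊆ Finset.Icc 1 n) (hk : P.card = k) (p : ℕ → ℕ)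
    (hp0 : p 0 = n + 1) (hpk : p (k + 1) = 1)
    (hdec : ∀ s t : ℕ, 1 ≤ s → s < t → t ≤ k → p t < p s)
    (himg : P = (Finset.Icc 1 k).image p) :
    ((decoratedMotzkin n P).ncard : ℤ) =
      2 ^ (n - k) *
        ∑ ε ∈ Finset.univ.filter (fun ε : Fin k → Bool =>
            (∀ t < k, 0 ≤ ht k ε t) ∧ -1 ≤ ht k ε k),
          ∏ t ∈ Finset.range (k + 1), (ht k ε t + 1) ^ (p t - p (t + 1)) :=
  card_decoratedMotzkin_general n k P hP p hp0 hpk hdec himg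
end

section
/- Let P = {p_1 < p_2 < ⋯ < p_k} ⊆ [n] and let N = {n_1 < n_2 < ⋯ < n_{k+1}} be the set of the k + 1 smallest positive integers not in P. Fix an ordering ω of P. Then there exists a permutation π ∈ S_n with Pin(π) = P and ord_P(π) = ω if and only if there exists a sequence τ listing each element of P ∪ N exactly once with Pin(τ) = P and ord_P(τ) = ω. -/
/-- The pinnacle set of a finite sequence `w` (given as a list): the set of values `w t`
at interior positions `t` with `w (t-1) < w t > w (t+1)`. -/
def pinSet (w : List ℕ) : Finset ℕ :=
  (((List.range w.length).filter (fun t =>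
      decide (0 < t ∧ t + 1 < w.length ∧
        w.getD (t - 1) 0 < w.getD t 0 ∧ w.getD (t + 1) 0 < w.getD t 0))).map
    (fun t => w.getD t 0)).toFinset

/-- `ordIn S π` is the subsequence of the list `π` consisting of the entries lying in `S`. -/
def ordIn (S : Finset ℕ) (π : List ℕ) : List ℕ :=
  π.filter (fun x => decide (x ∈ S))

/-!
If `π` has pinnacles `ω₁, …, ω_k` in this order, then the stretches of `π` before, between and
after them are nonempty, and their minima `c₀, …, c_k` are non-pinnacles with
`c_{i-1} < ω_i > c_i`. Every `c_i` either lies in `N` or exceeds all of `N`, because `N` consists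
of the `k + 1` smallest positive integers outside `P`; so the `c_i` can be lowered to distinct
elements of `N`, and interleaving these with `ω` gives `τ`.

Conversely, the same valleys of `τ` exhaust `N` and each lies below a pinnacle, so
`P ∪ N ⊆ [n]`. The remaining values of `[n]` all exceed the first entry of `τ` (an element of
`N`), so writing them in decreasing order in front of `τ` creates no new pinnacle.
-/

theorem mem_pinSet {w : List ℕ} {x : ℕ} :
    x ∈ pinSet w ↔ ∃ a b, [a, x, b] <:+: w ∧ a < x ∧ b < x := by
  simp only [pinSet, List.mem_toFinset, List.mem_map, List.mem_filter, List.mem_range,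
    decide_eq_true_eq, List.infix_iff_getElem?]
  constructor
  · rintro ⟨t, ⟨-, ht, ht1, hl, hr⟩, rfl⟩
    obtain ⟨k, rfl⟩ : ∃ k, t = k + 1 := ⟨t - 1, by omega⟩
    refine ⟨w.getD k 0, w.getD (k + 2) 0, ⟨k, by simp; omega, fun i hi => ?_⟩, hl, hr⟩
    simp only [List.length_cons, List.length_nil] at hi
    interval_cases i <;>
      simp [List.getD_eq_getElem?_getD, List.getElem?_eq_getElem (by omega : k < w.length),
        List.getElem?_eq_getElem (by omega : k + 1 < w.length),
        List.getElem?_eq_getElem (by omega : k + 2 < w.length), Nat.add_comm]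
  · rintro ⟨a, b, ⟨k, hk, h⟩, ha, hb⟩
    have h0 : w[k]? = some a := by simpa using h 0 (by simp)
    have h1 : w[k + 1]? = some x := by simpa [Nat.add_comm] using h 1 (by simp)
    have h2 : w[k + 2]? = some b := by simpa [Nat.add_comm] using h 2 (by simp)
    simp only [List.length_cons, List.length_nil] at hk
    refine ⟨k + 1, ⟨by omega, by omega, by omega, ?_, ?_⟩, ?_⟩ <;>
      simp [List.getD_eq_getElem?_getD, h0, h1, h2, ha, hb]

theorem mem_of_mem_pinSet {w : List ℕ} {x : ℕ} (h : x ∈ pinSet w) : x ∈ w := by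
  obtain ⟨a, b, hw, -⟩ := mem_pinSet.1 h
  exact hw.subset (by simp)

@[simp]
theorem pinSet_singleton (a : ℕ) : pinSet [a] = ∅ := by
  simp [pinSet]

theorem mem_pinSet_cons_cons {a b x : ℕ} {l : List ℕ} :
    x ∈ pinSet (a :: b :: l) ↔ (x = b ∧ a < b ∧ ∃ c ∈ l.head?, c < b) ∨ x ∈ pinSet (b :: l) := by
  simp only [mem_pinSet, List.infix_cons_iff (l₂ := b :: l), or_and_right, exists_or,
    List.cons_prefix_cons]
  refine or_congr_left ?_
  cases l <;> simp +contextual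

theorem pinSet_cons_cons_of_lt {a b : ℕ} {l : List ℕ} (hab : a < b) (hl : ∃ c ∈ l.head?, c < b) :
    pinSet (a :: b :: l) = insert b (pinSet (b :: l)) := by
  ext x
  rw [mem_pinSet_cons_cons, Finset.mem_insert]
  exact or_congr_left (and_iff_left ⟨hab, hl⟩)

theorem pinSet_cons_cons_of_not_lt {a b : ℕ} {l : List ℕ} (h : ¬(a < b ∧ ∃ c ∈ l.head?, c < b)) :
    pinSet (a :: b :: l) = pinSet (b :: l) := by
  ext x
  rw [mem_pinSet_cons_cons]
  exact or_iff_right (fun hx => h hx.2)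

theorem pinSet_cons_of_head_lt {a : ℕ} {l : List ℕ} (h : ∀ b ∈ l.head?, b < a) :
    pinSet (a :: l) = pinSet l := by
  cases l with
  | nil => rfl
  | cons b l => exact pinSet_cons_cons_of_not_lt (by simp at h; omega)

theorem notMem_pinSet_cons {a : ℕ} {l : List ℕ} (ha : a ∉ l) : a ∉ pinSet (a :: l) := by
  rw [mem_pinSet]
  rintro ⟨u, v, h, hu, -⟩
  rcases List.infix_cons_iff.1 h with h | h
  · rw [List.cons_prefix_cons] at h
    exact hu.ne h.1
  · exact ha (h.subset (by simp))

inductive IsValleySeq : List ℕ → List ℕ → Prop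
  | single (a : ℕ) : IsValleySeq [a] []
  | cons {a b p : ℕ} {c ω : List ℕ} :
      a < p → b < p → IsValleySeq (b :: c) ω → IsValleySeq (a :: b :: c) (p :: ω)

def weave : List ℕ → List ℕ → List ℕ
  | a :: c, p :: ω => a :: p :: weave c ω
  | c, _ => c

namespace IsValleySeq

variable {c ω : List ℕ}

theorem length_eq (h : IsValleySeq c ω) : c.length = ω.length + 1 := by
  induction h with
  | single => rfl
  | cons _ _ _ ih => simp [ih]

theorem of_forall₂_le {d : List ℕ} (h : IsValleySeq c ω) (hd : List.Forall₂ (· ≤ ·) d c) :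
    IsValleySeq d ω := by
  induction h generalizing d with
  | single => rcases hd with _ | ⟨-, ⟨⟩⟩; exact .single _
  | cons hap hbp _ ih =>
    rcases hd with _ | ⟨ha, _ | ⟨hb, hd⟩⟩
    exact .cons (by omega) (by omega) (ih (.cons hb hd))

theorem exists_lt (h : IsValleySeq c ω) (hω : ω ≠ []) : ∀ x ∈ c, ∃ p ∈ ω, x < p := by
  induction h with
  | single => exact absurd rfl hω
  | @cons a b p c ω hap hbp h ih =>
    intro x hx
    rcases List.mem_cons.1 hx with rfl | hx
    · exact ⟨p, by simp, hap⟩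
    cases ω with
    | nil => cases h; exact ⟨p, by simp, by simp_all⟩
    | cons => obtain ⟨q, hq, hxq⟩ := ih (by simp) x hx; exact ⟨q, by simp [hq], hxq⟩

theorem weave_perm (h : IsValleySeq c ω) : (weave c ω).Perm (c ++ ω) := by
  induction h with
  | single => rfl
  | cons _ _ _ ih =>
    exact ((ih.cons _).trans List.perm_middle.symm).cons _

theorem pinSet_weave (h : IsValleySeq c ω) : pinSet (weave c ω) = ω.toFinset := by
  induction h with
  | single => rfl
  | @cons a b p c ω hap hbp h ih =>
    obtain ⟨r, hr⟩ : ∃ r, weave (b :: c) ω = b :: r := by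
      cases h <;> exact ⟨_, rfl⟩
    simp only [weave, List.toFinset_cons, hr] at ih ⊢
    rw [pinSet_cons_cons_of_lt hap ⟨b, rfl, hbp⟩, pinSet_cons_of_head_lt (by simpa using hbp), ih]

theorem ordIn_weave {S : Finset ℕ} (h : IsValleySeq c ω) (hc : ∀ x ∈ c, x ∉ S)
    (hω : ∀ x ∈ ω, x ∈ S) : ordIn S (weave c ω) = ω := by
  induction h with
  | single => simp_all [weave, ordIn]
  | cons _ _ _ ih =>
    simp_all [weave, ordIn]

end IsValleySeq

theorem ordIn_pinSet_cons_cons_of_lt {x y : ℕ} {l : List ℕ} (hw : (x :: y :: l).Nodup)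
    (hxy : x < y) (hl : ∃ z ∈ l.head?, z < y) :
    ordIn (pinSet (x :: y :: l)) (x :: y :: l) = y :: ordIn (pinSet (y :: l)) (y :: l) := by
  have hyl : y ∉ l := (List.nodup_cons.1 hw.of_cons).1
  have hx : x ∉ pinSet (y :: l) := fun h => (List.nodup_cons.1 hw).1 (mem_of_mem_pinSet h)
  rw [pinSet_cons_cons_of_lt hxy hl]
  simp [ordIn, hxy.ne, hx, notMem_pinSet_cons hyl]
  exact List.filter_congr fun u hu => by simp [ne_of_mem_of_not_mem hu hyl]

theorem ordIn_pinSet_cons_cons_of_not_lt {x y : ℕ} {l : List ℕ} (hx : x ∉ y :: l)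
    (h : ¬(x < y ∧ ∃ z ∈ l.head?, z < y)) :
    ordIn (pinSet (x :: y :: l)) (x :: y :: l) = ordIn (pinSet (y :: l)) (y :: l) := by
  have hx' : x ∉ pinSet (y :: l) := fun h => hx (mem_of_mem_pinSet h)
  simp [pinSet_cons_cons_of_not_lt h, ordIn, hx']

/-- The last conjunct (the first valley lies below the first two entries) is what lets the
induction pass through a new pinnacle at the second entry. -/
theorem exists_isValleySeq_sublist : ∀ w : List ℕ, w.Nodup → w ≠ [] →
    ∃ a c, (a :: c).Sublist w ∧ (∀ x ∈ a :: c, x ∉ pinSet w) ∧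
      IsValleySeq (a :: c) (ordIn (pinSet w) w) ∧ ∀ x ∈ w.take 2, a ≤ x
  | [x], _, _ => ⟨x, [], by simp, by simp, by simpa [ordIn] using .single x, by simp⟩
  | x :: y :: l, hw, _ => by
    obtain ⟨a, c, hsub, hpin, hval, hmin⟩ :=
      exists_isValleySeq_sublist (y :: l) hw.of_cons (List.cons_ne_nil y l)
    have hxl : x ∉ y :: l := (List.nodup_cons.1 hw).1
    have hyl : y ∉ l := (List.nodup_cons.1 hw.of_cons).1
    have hx : x ∉ pinSet (y :: l) := fun h => hxl (mem_of_mem_pinSet h)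
    by_cases hpeak : x < y ∧ ∃ z ∈ l.head?, z < y
    · obtain ⟨z, hz, hzy⟩ := hpeak.2
      have hay : a < y := (hmin z (by cases l <;> simp_all)).trans_lt hzy
      have hcl : (a :: c).Sublist l := by
        rcases List.sublist_cons_iff.1 hsub with h | ⟨r, h, -⟩
        · exact h
        · exact absurd (List.cons_eq_cons.1 h).1 hay.ne
      rw [ordIn_pinSet_cons_cons_of_lt hw hpeak.1 hpeak.2, pinSet_cons_cons_of_lt hpeak.1 hpeak.2]
      refine ⟨x, a :: c, hsub.cons_cons x, ?_, .cons hpeak.1 hay hval, by simp [hpeak.1.le]⟩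
      simp only [List.forall_mem_cons, Finset.mem_insert, not_or]
      exact ⟨⟨hpeak.1.ne, hx⟩, ⟨hay.ne, hpin a List.mem_cons_self⟩, fun u hu =>
        ⟨ne_of_mem_of_not_mem (hcl.subset (.tail _ hu)) hyl, hpin u (.tail _ hu)⟩⟩
    · rw [ordIn_pinSet_cons_cons_of_not_lt hxl hpeak, pinSet_cons_cons_of_not_lt hpeak]
      have hay : a ≤ y := hmin y (by simp)
      rcases le_total x a with hxa | hax
      · refine ⟨x, c, ((List.sublist_cons_self a c).trans hsub).cons_cons x, ?_, ?_,
          by simp [hxa.trans hay]⟩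
        · exact List.forall_mem_cons.2 ⟨hx, fun u hu => hpin u (List.mem_cons_of_mem a hu)⟩
        · exact hval.of_forall₂_le (.cons hxa (List.forall₂_same.2 fun _ _ => le_rfl))
      · exact ⟨a, c, hsub.trans (List.sublist_cons_self x _), hpin, hval, by simp [hax, hay]⟩

theorem exists_forall₂_le_of_card_eq :
    ∀ (c : List ℕ) (N : Finset ℕ), c.Nodup → c.length = N.card →
      (∀ x ∈ c, x ∈ N ∨ ∀ y ∈ N, y < x) →
      ∃ d : List ℕ, d.Nodup ∧ d.toFinset = N ∧ List.Forall₂ (· ≤ ·) d c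
  | [], N, _, hN, _ => ⟨[], List.nodup_nil, by simp [Finset.card_eq_zero.1 hN.symm], .nil⟩
  | x :: c, N, hc, hN, hcN => by
    obtain ⟨y, hyN, hyc, hyx⟩ : ∃ y ∈ N, y ∉ c ∧ y ≤ x := by
      rcases hcN x List.mem_cons_self with hx | hx
      · exact ⟨x, hx, (List.nodup_cons.1 hc).1, le_rfl⟩
      · obtain ⟨y, hyN, hyc⟩ := Finset.exists_mem_notMem_of_card_lt_card
          (s := c.toFinset) (t := N) (by simpa [List.toFinset_card_of_nodup hc.of_cons] using hN.le)
        exact ⟨y, hyN, by simpa using hyc, (hx y hyN).le⟩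
    have hcN' : ∀ u ∈ c, u ∈ N.erase y ∨ ∀ v ∈ N.erase y, v < u := fun u hu =>
      (hcN u (List.mem_cons_of_mem x hu)).imp
        (fun h => Finset.mem_erase.2 ⟨ne_of_mem_of_not_mem hu hyc, h⟩)
        (fun h v hv => h v (Finset.mem_of_mem_erase hv))
    obtain ⟨d, hd, hdN, hdc⟩ := exists_forall₂_le_of_card_eq c (N.erase y) hc.of_cons
      (by simp [Finset.card_erase_of_mem hyN, ← hN]) hcN'
    refine ⟨y :: d, List.nodup_cons.2 ⟨fun h => ?_, hd⟩, ?_, .cons hyx hdc⟩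
    · simpa [hdN] using List.mem_toFinset.2 h
    · simp [hdN, Finset.insert_erase hyN]

theorem toFinset_ordIn {S : Finset ℕ} {w : List ℕ} (h : S ⊆ w.toFinset) :
    (ordIn S w).toFinset = S := by
  ext x
  simpa [ordIn] using fun hx => List.mem_toFinset.1 (h hx)

theorem length_ordIn {S : Finset ℕ} {w : List ℕ} (hw : w.Nodup) (h : S ⊆ w.toFinset) :
    (ordIn S w).length = S.card := by
  conv_rhs => rw [← toFinset_ordIn h]
  exact (List.toFinset_card_of_nodup (hw.filter _)).symm

theorem exists_isValleySeq_of_pinSet_eq {π ω : List ℕ} {P N : Finset ℕ} (hπ : π.Nodup)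
    (hπpos : ∀ x ∈ π, 1 ≤ x) (hπP : pinSet π = P) (hπω : ordIn P π = ω)
    (hN : N.card = ω.length + 1)
    (hNsmall : ∀ m : ℕ, 1 ≤ m → m ∉ P → m ∉ N → ∀ m' ∈ N, m' < m) :
    ∃ d : List ℕ, d.Nodup ∧ d.toFinset = N ∧ IsValleySeq d ω := by
  rcases eq_or_ne π [] with rfl | hne
  · obtain rfl : ω = [] := hπω.symm
    obtain ⟨m, rfl⟩ := Finset.card_eq_one.1 hN
    exact ⟨[m], by simp, by simp, .single m⟩
  obtain ⟨a, c, hsub, hcP, hc, -⟩ := exists_isValleySeq_sublist π hπ hne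
  rw [hπP, hπω] at hc
  rw [hπP] at hcP
  obtain ⟨d, hd, hdN, hdc⟩ := exists_forall₂_le_of_card_eq (a :: c) N (hsub.nodup hπ)
    (by rw [hc.length_eq, hN]) fun x hx => or_iff_not_imp_left.2 fun hxN =>
      hNsmall x (hπpos x (hsub.subset hx)) (hcP x hx) hxN
  exact ⟨d, hd, hdN, hc.of_forall₂_le hdc⟩

theorem exists_witness_of_pinSet_eq {π ω : List ℕ} {P N : Finset ℕ} (hπ : π.Nodup)
    (hπpos : ∀ x ∈ π, 1 ≤ x) (hπP : pinSet π = P) (hπω : ordIn P π = ω)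
    (hω : ω.Nodup) (hωP : ω.toFinset = P) (hN : N.card = ω.length + 1)
    (hNP : ∀ m ∈ N, m ∉ P) (hNsmall : ∀ m : ℕ, 1 ≤ m → m ∉ P → m ∉ N → ∀ m' ∈ N, m' < m) :
    ∃ τ : List ℕ, τ.Nodup ∧ τ.toFinset = P ∪ N ∧ pinSet τ = P ∧ ordIn P τ = ω := by
  obtain ⟨d, hd, hdN, h⟩ := exists_isValleySeq_of_pinSet_eq hπ hπpos hπP hπω hN hNsmall
  have hdP : ∀ x ∈ d, x ∉ P := fun x hx => hNP x (hdN ▸ List.mem_toFinset.2 hx)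
  have hωP' : ∀ x ∈ ω, x ∈ P := fun x hx => hωP ▸ List.mem_toFinset.2 hx
  refine ⟨weave d ω, h.weave_perm.nodup_iff.2 (List.nodup_append.2 ⟨hd, hω, ?_⟩), ?_,
    h.pinSet_weave.trans hωP, h.ordIn_weave hdP hωP'⟩
  · exact fun x hx y hy hxy => hdP x hx (hxy ▸ hωP' y hy)
  · rw [List.toFinset_eq_of_perm _ _ h.weave_perm, List.toFinset_append, hdN, hωP,
      Finset.union_comm]

theorem pinSet_append_of_pairwise_gt {D τ : List ℕ} (hD : D.Pairwise (· > ·))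
    (hτ : ∀ a ∈ D, ∀ b ∈ τ.head?, b < a) : pinSet (D ++ τ) = pinSet τ := by
  induction D with
  | nil => rfl
  | cons a D ih =>
    rw [List.pairwise_cons] at hD
    rw [List.cons_append, pinSet_cons_of_head_lt, ih hD.2 fun a ha => hτ a (by simp [ha])]
    cases D with
    | nil => exact hτ a (by simp)
    | cons a' D => simpa using hD.1 a' (by simp)

theorem exists_perm_range'_of_subset {n : ℕ} {τ : List ℕ} (hτ : τ.Nodup)
    (hsub : τ.toFinset ⊆ Finset.Icc 1 n)
    (hgt : ∀ m ∈ Finset.Icc 1 n, m ∉ τ → ∀ b ∈ τ.head?, b < m) :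
    ∃ π : List ℕ, π.Perm (List.range' 1 n) ∧ pinSet π = pinSet τ ∧
      ∀ S ⊆ τ.toFinset, ordIn S π = ordIn S τ := by
  set D := (Finset.Icc 1 n \ τ.toFinset).sort (· ≥ ·)
  have hD : ∀ x, x ∈ D ↔ x ∈ Finset.Icc 1 n ∧ x ∉ τ := by simp [D]
  refine ⟨D ++ τ, List.perm_of_nodup_nodup_toFinset_eq ?_ List.nodup_range' ?_,
    pinSet_append_of_pairwise_gt (Finset.sortedGT_sort _).pairwise
      fun a ha => hgt a ((hD a).1 ha).1 ((hD a).1 ha).2, fun S hS => ?_⟩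
  · exact List.nodup_append.2 ⟨Finset.sort_nodup _ _, hτ,
      fun x hx y hy hxy => ((hD x).1 hx).2 (hxy ▸ hy)⟩
  · rw [List.toFinset_append, Finset.sort_toFinset, List.toFinset_range'_1_1,
      Finset.sdiff_union_of_subset hsub]
  · rw [ordIn, List.filter_append, List.filter_eq_nil_iff.2, List.nil_append]
    · rfl
    · exact fun x hx hxS => ((hD x).1 hx).2 (List.mem_toFinset.1 (hS (by simpa using hxS)))

theorem subset_Icc_of_pinSet_eq {n : ℕ} {P N : Finset ℕ} {τ : List ℕ} (hn : 1 ≤ n)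
    (hP : P ⊆ Finset.Icc 1 n) (hN : N.card = P.card + 1) (hNpos : ∀ m ∈ N, 1 ≤ m)
    (hNsmall : ∀ m : ℕ, 1 ≤ m → m ∉ P → m ∉ N → ∀ m' ∈ N, m' < m)
    (hτ : τ.Nodup) (hτPN : τ.toFinset = P ∪ N) (hτP : pinSet τ = P) : N ⊆ Finset.Icc 1 n := by
  rcases P.eq_empty_or_nonempty with rfl | ⟨p, hp⟩
  · obtain ⟨m, rfl⟩ := Finset.card_eq_one.1 hN
    obtain rfl : m = 1 := by
      by_contra hm
      have := hNsmall 1 le_rfl (Finset.notMem_empty 1) (by simpa [eq_comm] using hm) m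
        (Finset.mem_singleton_self m)
      have := hNpos m (Finset.mem_singleton_self m)
      omega
    simpa using hn
  have hPτ : P ⊆ τ.toFinset := hτPN ▸ Finset.subset_union_left
  have hω : (ordIn P τ).length = P.card := length_ordIn hτ hPτ
  obtain ⟨a, c, hsub, hcP, hc, -⟩ :=
    exists_isValleySeq_sublist τ hτ (List.ne_nil_of_mem (List.mem_toFinset.1 (hPτ hp)))
  rw [hτP] at hc hcP
  have hcN : (a :: c).toFinset = N := by
    refine Finset.eq_of_subset_of_card_le (fun x hx => ?_) ?_
    · rw [List.mem_toFinset] at hx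
      have := hτPN ▸ List.mem_toFinset.2 (hsub.subset hx)
      exact (Finset.mem_union.1 this).resolve_left (hcP x hx)
    · rw [List.toFinset_card_of_nodup (hsub.nodup hτ), hc.length_eq, hω, hN]
  intro m hm
  obtain ⟨q, hq, hmq⟩ := hc.exists_lt (List.ne_nil_of_length_pos (hω ▸ Finset.card_pos.2 ⟨p, hp⟩)) m
    (List.mem_toFinset.1 (hcN ▸ hm))
  have hqn := (Finset.mem_Icc.1 (hP (by simpa [ordIn] using (List.mem_filter.1 hq).2))).2
  exact Finset.mem_Icc.2 ⟨hNpos m hm, by omega⟩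

theorem exists_perm_of_witness {n : ℕ} {P N : Finset ℕ} {τ : List ℕ}
    (hP : P ⊆ Finset.Icc 1 n) (hN : N.card = P.card + 1) (hNpos : ∀ m ∈ N, 1 ≤ m)
    (hNsmall : ∀ m : ℕ, 1 ≤ m → m ∉ P → m ∉ N → ∀ m' ∈ N, m' < m)
    (hτ : τ.Nodup) (hτPN : τ.toFinset = P ∪ N) (hτP : pinSet τ = P) :
    ∃ π : List ℕ, π.Perm (List.range' 1 n) ∧ pinSet π = P ∧ ordIn P π = ordIn P τ := by
  rcases Nat.eq_zero_or_pos n with rfl | hn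
  · obtain rfl : P = ∅ := by simpa using hP
    exact ⟨[], List.Perm.refl _, rfl, by simp [ordIn]⟩
  have hhead : ∀ b ∈ τ.head?, b ∈ N := by
    intro b hb
    obtain ⟨l, rfl⟩ : ∃ l, τ = b :: l := ⟨_, List.eq_cons_of_mem_head? hb⟩
    have hbP : b ∉ P := hτP ▸ notMem_pinSet_cons (List.nodup_cons.1 hτ).1
    exact (Finset.mem_union.1 (hτPN ▸ by simp)).resolve_left hbP
  have hgt : ∀ m ∈ Finset.Icc 1 n, m ∉ τ → ∀ b ∈ τ.head?, b < m := by
    intro m hm hmτ b hb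
    rw [← List.mem_toFinset, hτPN, Finset.mem_union, not_or] at hmτ
    exact hNsmall m (Finset.mem_Icc.1 hm).1 hmτ.1 hmτ.2 b (hhead b hb)
  have hNn := subset_Icc_of_pinSet_eq hn hP hN hNpos hNsmall hτ hτPN hτP
  obtain ⟨π, hπ, hπτ, hord⟩ :=
    exists_perm_range'_of_subset hτ (hτPN ▸ Finset.union_subset hP hNn) hgt
  exact ⟨π, hπ, hπτ.trans hτP, hord P (hτPN ▸ Finset.subset_union_left)⟩

theorem ordering_witness_reduction (n k : ℕ) (P : Finset ℕ)
    (hP : P ⊆ Finset.Icc 1 n) (hk : P.card = k)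
    (N : Finset ℕ) (hNcard : N.card = k + 1) (hNpos : ∀ m ∈ N, 1 ≤ m)
    (hNP : ∀ m ∈ N, m ∉ P)
    (hNsmall : ∀ m : ℕ, 1 ≤ m → m ∉ P → m ∉ N → ∀ m' ∈ N, m' < m)
    (ω : List ℕ) (hω : ω.Nodup) (hωP : ω.toFinset = P) :
    (∃ π : List ℕ, π.Perm (List.range' 1 n) ∧ pinSet π = P ∧ ordIn P π = ω) ↔
      (∃ τ : List ℕ, τ.Nodup ∧ τ.toFinset = P ∪ N ∧ pinSet τ = P ∧ ordIn P τ = ω) := by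
  constructor
  · rintro ⟨π, hπ, hπP, hπω⟩
    have hωlen : ω.length = k := by rw [← List.toFinset_card_of_nodup hω, hωP, hk]
    exact exists_witness_of_pinSet_eq (hπ.nodup_iff.2 List.nodup_range')
      (fun x hx => (List.mem_range'_1.1 (hπ.mem_iff.1 hx)).1) hπP hπω hω hωP
      (by rw [hNcard, hωlen]) hNP hNsmall
  · rintro ⟨τ, hτ, hτPN, hτP, rfl⟩
    exact exists_perm_of_witness hP (by rw [hNcard, hk]) hNpos hNsmall hτ hτPN hτP
end

section
/- Let P = {p_1 < p_2 < ⋯ < p_k} ⊆ [n], let N be the set of the k + 1 smallest positive integers not in P, let σ : P ∪ N → [2k+1] be the unique order-preserving bijection, and let P' = σ(P). Then the number of orderings ω of P for which some π ∈ S_n has Pin(π) = P and ord_P(π) = ω equals the number of orderings ω' of P' for which some π' ∈ S_{2k+1} has Pin(π') = P' and ord_{P'}(π') = ω'. -/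
/-- The set of admissible orderings of `P` with respect to permutations of `{1, …, n}`:
orderings `ω` of `P` for which some permutation `π` of `{1, …, n}` has pinnacle set `P`
and the entries of `P` appear in `π` in the order `ω`. -/
def admissibleOrderings (n : ℕ) (P : Finset ℕ) : Set (List ℕ) :=
  {ω | ω.Nodup ∧ ω.toFinset = P ∧
    ∃ π : List ℕ, π.Perm (List.range' 1 n) ∧ pinSet π = P ∧ ordIn P π = ω}

theorem List.Pairwise.getD_getD {α : Type*} {r : α → α → Prop} {l : List α} (h : l.Pairwise r)
    {i j : ℕ} (hij : i < j) (hj : j < l.length) (x : α) : r (l.getD i x) (l.getD j x) := by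
  rw [List.getD_eq_getElem _ _ (hij.trans hj), List.getD_eq_getElem _ _ hj]
  exact List.pairwise_iff_getElem.1 h _ _ _ _ hij

theorem List.getD_mem_of_lt {α : Type*} {l : List α} {i : ℕ} (h : i < l.length) (x : α) :
    l.getD i x ∈ l := by
  rw [List.getD_eq_getElem _ _ h]
  exact List.getElem_mem h

theorem List.getD_map_of_lt {α β : Type*} {l : List α} (f : α → β) {i : ℕ} (h : i < l.length)
    (x : α) (y : β) : (l.map f).getD i y = f (l.getD i x) := by
  simp [List.getD_eq_getElem?_getD, h]

theorem List.Nodup.getD_inj_iff {α : Type*} {l : List α} (hl : l.Nodup) {i j : ℕ}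
    (hi : i < l.length) (hj : j < l.length) (x : α) : l.getD i x = l.getD j x ↔ i = j := by
  rw [List.getD_eq_getElem _ _ hi, List.getD_eq_getElem _ _ hj, hl.getElem_inj_iff]

theorem List.map_getD_range {α : Type*} (l : List α) (x : α) :
    (List.range l.length).map (l.getD · x) = l :=
  List.ext_getElem (by simp) fun i _ h => by
    rw [List.getElem_map, List.getElem_range, List.getD_eq_getElem _ _ h]

theorem List.filter_eq_map_filter_range {α : Type*} (l : List α) (x : α) (p : α → Bool) :
    l.filter p = ((List.range l.length).filter (p ∘ (l.getD · x))).map (l.getD · x) := by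
  conv_lhs => rw [← l.map_getD_range x]
  exact List.filter_map

theorem List.perm_append_filter_notMem {α : Type*} [DecidableEq α] {l s : List α}
    (hl : l.Nodup) (hs : s.Nodup) (hsl : ∀ x ∈ s, x ∈ l) : (s ++ l.filter (· ∉ s)).Perm l := by
  have hsplit := List.filter_append_perm (· ∈ s) l
  simp only [decide_not] at hsplit ⊢
  refine List.Perm.trans (List.Perm.append_right _ ?_) hsplit
  rw [List.perm_ext_iff_of_nodup hs (hl.filter _)]
  intro x
  simp only [List.mem_filter, decide_eq_true_eq]
  exact ⟨fun hx => ⟨hsl x hx, hx⟩, And.right⟩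

theorem List.map_invFunOn_map {α β : Type*} [Nonempty α] {f : α → β} {s : Set α}
    (hf : Set.InjOn f s) {l : List α} (hl : ∀ x ∈ l, x ∈ s) :
    (l.map f).map (Function.invFunOn f s) = l := by
  rw [List.map_map]
  exact (List.map_congr_left fun x hx => hf.leftInvOn_invFunOn (hl x hx)).trans l.map_id

theorem Finset.exists_injOn_le_of_card_eq {α : Type*} [LinearOrder α] {D N : Finset α}
    (hcard : D.card = N.card) (hlt : ∀ x ∈ D, x ∉ N → ∀ m ∈ N, m < x) :
    ∃ f : α → α, Set.InjOn f D ∧ (∀ x ∈ D, f x ∈ N ∧ f x ≤ x) ∧ ∀ x ∉ D, f x = x := by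
  let e := Finset.equivOfCardEq (Finset.card_sdiff_comm hcard)
  have he : ∀ y : ↥(D \ N), (e y : α) ∈ N ∧ (e y : α) ∉ D := fun y => Finset.mem_sdiff.1 (e y).2
  let f x := if h : x ∈ D \ N then (e ⟨x, h⟩ : α) else x
  have hf : ∀ x ∈ D, (x ∈ N ∧ f x = x) ∨ ∃ h : x ∈ D \ N, f x = e ⟨x, h⟩ := by
    intro x hx
    by_cases hxN : x ∈ N
    · exact Or.inl ⟨hxN, dif_neg fun h => (Finset.mem_sdiff.1 h).2 hxN⟩
    · have h : x ∈ D \ N := Finset.mem_sdiff.2 ⟨hx, hxN⟩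
      exact Or.inr ⟨h, dif_pos h⟩
  refine ⟨f, fun x hx y hy hxy => ?_, fun x hx => ?_,
    fun x hx => dif_neg fun h => hx (Finset.mem_sdiff.1 h).1⟩
  · rcases hf x hx with ⟨-, hfx⟩ | ⟨hx', hfx⟩ <;>
      rcases hf y hy with ⟨-, hfy⟩ | ⟨hy', hfy⟩ <;> rw [hfx, hfy] at hxy
    · exact hxy
    · exact absurd hx (hxy ▸ (he _).2)
    · exact absurd hy (hxy.symm ▸ (he _).2)
    · simpa using e.injective (Subtype.ext hxy)
  · rcases hf x hx with ⟨hxN, hfx⟩ | ⟨hx', hfx⟩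
    · exact ⟨by rwa [hfx], hfx.le⟩
    · rw [hfx]
      exact ⟨(he _).1, (hlt x hx (Finset.mem_sdiff.1 hx').2 _ (he _).1).le⟩

structure IsPinnacleAt (w : List ℕ) (t : ℕ) : Prop where
  pos : 0 < t
  succ_lt_length : t + 1 < w.length
  pred_lt : w.getD (t - 1) 0 < w.getD t 0
  succ_lt : w.getD (t + 1) 0 < w.getD t 0

theorem mem_pinSet_s5 {w : List ℕ} {v : ℕ} :
    v ∈ pinSet w ↔ ∃ t, IsPinnacleAt w t ∧ w.getD t 0 = v := by
  simp only [pinSet, List.mem_toFinset, List.mem_map, List.mem_filter, List.mem_range,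
    decide_eq_true_eq]
  constructor
  · rintro ⟨t, ⟨-, h0, h1, h2, h3⟩, rfl⟩
    exact ⟨t, ⟨h0, h1, h2, h3⟩, rfl⟩
  · rintro ⟨t, ⟨h0, h1, h2, h3⟩, rfl⟩
    exact ⟨t, ⟨by omega, h0, h1, h2, h3⟩, rfl⟩

namespace IsPinnacleAt

variable {w : List ℕ} {t : ℕ}

theorem not_succ (h : IsPinnacleAt w t) : ¬ IsPinnacleAt w (t + 1) := fun h' => by
  have := h'.pred_lt
  simp only [Nat.add_sub_cancel] at this
  exact absurd h.succ_lt this.not_gt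

theorem not_pred (h : IsPinnacleAt w t) : ¬ IsPinnacleAt w (t - 1) := fun h' => by
  have := h'.succ_lt
  rw [Nat.sub_add_cancel h.pos] at this
  exact absurd h.pred_lt this.not_gt

theorem exists_valley_between {s : ℕ} (hs : IsPinnacleAt w s) (ht : IsPinnacleAt w t)
    (hst : s < t) : ∃ c, s < c ∧ c < t ∧ ¬ IsPinnacleAt w c ∧
      w.getD c 0 < w.getD s 0 ∧ w.getD c 0 < w.getD t 0 := by
  have hgap : s + 1 ≠ t := fun h => hs.not_succ (h ▸ ht)
  by_cases hle : w.getD (s + 1) 0 ≤ w.getD (t - 1) 0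
  · exact ⟨s + 1, by omega, by omega, hs.not_succ, hs.succ_lt, hle.trans_lt ht.pred_lt⟩
  · exact ⟨t - 1, by omega, by omega, ht.not_pred, (not_le.1 hle).trans hs.succ_lt, ht.pred_lt⟩

end IsPinnacleAt

theorem not_isPinnacleAt_of_pairwise {w : List ℕ} (h : w.Pairwise (· < ·)) (t : ℕ) :
    ¬ IsPinnacleAt w t := fun ht =>
  absurd ht.succ_lt (h.getD_getD (Nat.lt_succ_self t) ht.succ_lt_length 0).not_gt

theorem getD_mem_pinSet_iff {w : List ℕ} (hw : w.Nodup) {t : ℕ} (ht : t < w.length) :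
    w.getD t 0 ∈ pinSet w ↔ IsPinnacleAt w t := by
  refine ⟨fun h => ?_, fun h => mem_pinSet_s5.2 ⟨t, h, rfl⟩⟩
  obtain ⟨s, hs, hst⟩ := mem_pinSet_s5.1 h
  rwa [← (hw.getD_inj_iff (by have := hs.succ_lt_length; omega) ht 0).1 hst]

theorem exists_pinnaclePositions {w : List ℕ} (hw : w.Nodup) :
    ∃ T : List ℕ, T.Pairwise (· < ·) ∧ (∀ t ∈ T, IsPinnacleAt w t) ∧
      ordIn (pinSet w) w = T.map (w.getD · 0) := by
  classical
  refine ⟨(List.range w.length).filter (IsPinnacleAt w ·),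
    List.pairwise_lt_range.sublist List.filter_sublist,
    fun t ht => (by simpa using ht : _ ∧ _).2, ?_⟩
  rw [ordIn, List.filter_eq_map_filter_range _ 0]
  congr 1
  refine List.filter_congr fun t ht => ?_
  simp only [Function.comp_apply, decide_eq_decide]
  exact getD_mem_pinSet_iff hw (List.mem_range.1 ht)

theorem exists_valleyPositions {w : List ℕ} {k : ℕ} (hk : 0 < k) {t : ℕ → ℕ}
    (hpin : ∀ i < k, IsPinnacleAt w (t i)) (ht : StrictMonoOn t (Set.Iio k)) :
    ∃ c : ℕ → ℕ, StrictMonoOn c (Set.Iic k) ∧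
      (∀ i ≤ k, c i < w.length ∧ ¬ IsPinnacleAt w (c i)) ∧
      ∀ i < k, w.getD (c i) 0 < w.getD (t i) 0 ∧ w.getD (c (i + 1)) 0 < w.getD (t i) 0 := by
  -- `c i` lies between the pinnacle positions `t (i - 1)` and `t i`; for `i = 0` only the
  -- right-hand bound applies and for `i = k` only the left-hand one.
  have slot : ∀ i, ∃ c, i ≤ k → c < w.length ∧ ¬ IsPinnacleAt w c ∧
      (i < k → c < t i ∧ w.getD c 0 < w.getD (t i) 0) ∧
      (0 < i → t (i - 1) < c ∧ w.getD c 0 < w.getD (t (i - 1)) 0) := by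
    intro i
    rcases Nat.eq_zero_or_pos i with rfl | hi0
    · have h0 := hpin 0 hk
      exact ⟨t 0 - 1, fun _ => ⟨by have := h0.succ_lt_length; omega, h0.not_pred,
        fun _ => ⟨by have := h0.pos; omega, h0.pred_lt⟩, by omega⟩⟩
    rcases lt_trichotomy i k with hik | rfl | hik
    · obtain ⟨c, hlc, hcr, hc, hcl, hcr'⟩ := (hpin (i - 1) (by omega)).exists_valley_between
        (hpin i hik) (ht (by simp; omega) (by simpa using hik) (by omega))
      exact ⟨c, fun _ => ⟨by have := (hpin i hik).succ_lt_length; omega, hc,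
        fun _ => ⟨hcr, hcr'⟩, fun _ => ⟨hlc, hcl⟩⟩⟩
    · have hl := hpin (i - 1) (by omega)
      exact ⟨t (i - 1) + 1, fun _ => ⟨hl.succ_lt_length, hl.not_succ, by omega,
        fun _ => ⟨by omega, hl.succ_lt⟩⟩⟩
    · exact ⟨0, fun h => absurd h (by omega)⟩
  choose c hc using slot
  refine ⟨c, fun i hi j hj hij => ?_, fun i hi => ⟨(hc i hi).1, (hc i hi).2.1⟩,
    fun i hi => ⟨((hc i hi.le).2.2.1 hi).2, ?_⟩⟩
  · have hjk : j ≤ k := hj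
    have hti : t i ≤ t (j - 1) :=
      ht.monotoneOn (by simp; omega) (by simp; omega) (by omega)
    have := ((hc i hi).2.2.1 (by omega)).1
    have := ((hc j hj).2.2.2 (by omega)).1
    omega
  · simpa using ((hc (i + 1) hi).2.2.2 (Nat.succ_pos i)).2

section interleave

variable {α : Type*}

def interleave : List α → List α → List α
  | [], _ => []
  | a :: _, [] => [a]
  | a :: d, p :: ω => a :: p :: interleave d ω

theorem interleave_perm : ∀ {d ω : List α}, d.length = ω.length + 1 →
    (interleave d ω).Perm (d ++ ω)
  | [], _, h => by simp at h
  | [_], [], _ => by simp [interleave]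
  | _ :: _ :: _, [], h => by simp at h
  | a :: d, p :: ω, h => by
    simp only [interleave, List.cons_append]
    exact (((interleave_perm (by simpa using h)).cons p).trans List.perm_middle.symm).cons a

theorem getD_interleave_append_two_mul (r : List α) (x : α) : ∀ {d ω : List α} {i : ℕ},
    d.length = ω.length + 1 → i < d.length → (interleave d ω ++ r).getD (2 * i) x = d.getD i x
  | [], _, _, h, _ => by simp at h
  | [_], [], 0, _, _ => rfl
  | [_], [], _ + 1, _, hi => by simp at hi
  | _ :: _ :: _, [], _, h, _ => by simp at h
  | _ :: _, _ :: _, 0, _, _ => rfl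
  | _ :: _, _ :: _, i + 1, h, hi => by
    rw [show 2 * (i + 1) = 2 * i + 1 + 1 by ring]
    exact getD_interleave_append_two_mul r x (by simpa using h) (by simpa using hi)

theorem getD_interleave_append_two_mul_add_one (r : List α) (x : α) : ∀ {d ω : List α} {i : ℕ},
    d.length = ω.length + 1 → i < ω.length →
      (interleave d ω ++ r).getD (2 * i + 1) x = ω.getD i x
  | _, [], _, _, hi => by simp at hi
  | [], _ :: _, _, h, _ => by simp at h
  | _ :: _, _ :: _, 0, _, _ => rfl
  | _ :: _, _ :: _, i + 1, h, hi => by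
    rw [show 2 * (i + 1) + 1 = 2 * i + 1 + 1 + 1 by ring]
    exact getD_interleave_append_two_mul_add_one r x (by simpa using h) (by simpa using hi)

theorem filter_interleave (p : α → Bool) : ∀ {d ω : List α}, d.length = ω.length + 1 →
    (∀ a ∈ d, p a = false) → (∀ a ∈ ω, p a = true) → (interleave d ω).filter p = ω
  | [], _, h, _, _ => by simp at h
  | [a], [], _, hd, _ => by simp [interleave, hd a]
  | _ :: _ :: _, [], h, _, _ => by simp at h
  | a :: d, b :: ω, h, hd, hω => by
    simp only [interleave, List.mem_cons, forall_eq_or_imp] at hd hω ⊢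
    rw [List.filter_cons_of_neg (by simp [hd.1]), List.filter_cons_of_pos hω.1,
      filter_interleave p (by simpa using h) hd.2 hω.2]

end interleave

structure IsValleyList (P : Finset ℕ) (ω d : List ℕ) : Prop where
  length_eq : d.length = ω.length + 1
  nodup : d.Nodup
  pos : ∀ x ∈ d, 0 < x
  not_mem : ∀ x ∈ d, x ∉ P
  lt_left : ∀ i < ω.length, d.getD i 0 < ω.getD i 0
  lt_right : ∀ i < ω.length, d.getD (i + 1) 0 < ω.getD i 0

theorem isValleyList_of_valleyPositions {π T : List ℕ} (hπ : π.Nodup) (hpos : ∀ x ∈ π, 0 < x)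
    {c : ℕ → ℕ} (hc : StrictMonoOn c (Set.Iic T.length))
    (hcpin : ∀ i ≤ T.length, c i < π.length ∧ ¬ IsPinnacleAt π (c i))
    (hclt : ∀ i < T.length, π.getD (c i) 0 < π.getD (T.getD i 0) 0 ∧
      π.getD (c (i + 1)) 0 < π.getD (T.getD i 0) 0) :
    IsValleyList (pinSet π) (T.map (π.getD · 0))
      ((List.range (T.length + 1)).map (fun i => π.getD (c i) 0)) := by
  have hd : ∀ i ≤ T.length,
      ((List.range (T.length + 1)).map (fun i => π.getD (c i) 0)).getD i 0 = π.getD (c i) 0 :=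
    fun i hi => by simp [Nat.lt_succ_of_le hi]
  refine ⟨by simp, ?_, ?_, ?_, fun i hi => ?_, fun i hi => ?_⟩
  · refine List.Nodup.map_on (fun i hi j hj hij => hc.injOn ?_ ?_ ?_) List.nodup_range
    · simpa [Nat.lt_succ_iff] using hi
    · simpa [Nat.lt_succ_iff] using hj
    · simp only [List.mem_range, Nat.lt_succ_iff] at hi hj
      exact (hπ.getD_inj_iff (hcpin i hi).1 (hcpin j hj).1 0).1 hij
  · simp only [List.mem_map, List.mem_range, forall_exists_index, and_imp]
    rintro _ i hi rfl
    exact hpos _ (List.getD_mem_of_lt (hcpin i (by omega)).1 0)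
  · simp only [List.mem_map, List.mem_range, forall_exists_index, and_imp]
    rintro _ i hi rfl
    rw [getD_mem_pinSet_iff hπ (hcpin i (by omega)).1]
    exact (hcpin i (by omega)).2
  · rw [List.length_map] at hi
    rw [hd i hi.le, List.getD_map_of_lt _ hi 0]
    exact (hclt i hi).1
  · rw [List.length_map] at hi
    rw [hd (i + 1) hi, List.getD_map_of_lt _ hi 0]
    exact (hclt i hi).2

theorem exists_isValleyList_of_mem_admissibleOrderings {n : ℕ} {P : Finset ℕ} {ω : List ℕ}
    (hP : P.Nonempty) (h : ω ∈ admissibleOrderings n P) : ∃ d, IsValleyList P ω d := by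
  obtain ⟨-, hωP, π, hperm, rfl, rfl⟩ := h
  have hπ : π.Nodup := hperm.nodup_iff.2 List.nodup_range'
  have hpos : ∀ x ∈ π, 0 < x := fun x hx => by
    have := hperm.subset hx
    rw [List.mem_range'_1] at this
    omega
  obtain ⟨T, hT, hTpin, hTω⟩ := exists_pinnaclePositions hπ
  have hk : 0 < T.length := by
    obtain ⟨p, hp⟩ := hP
    rw [← hωP, hTω, List.mem_toFinset, List.mem_map] at hp
    obtain ⟨t, ht, -⟩ := hp
    exact List.length_pos_of_mem ht
  obtain ⟨c, hc, hcpin, hclt⟩ := exists_valleyPositions (t := (T.getD · 0)) hk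
    (fun i hi => hTpin _ (List.getD_mem_of_lt hi 0))
    (fun i _ j hj hij => hT.getD_getD hij hj 0)
  exact ⟨_, hTω ▸ isValleyList_of_valleyPositions hπ hpos hc hcpin hclt⟩

namespace IsValleyList

variable {P : Finset ℕ} {ω d : List ℕ}

theorem exists_lt (h : IsValleyList P ω d) (hω : ω ≠ []) {x : ℕ} (hx : x ∈ d) :
    ∃ p ∈ ω, x < p := by
  obtain ⟨i, hi, rfl⟩ := List.getElem_of_mem hx
  rw [← List.getD_eq_getElem _ 0 hi]
  rcases lt_or_ge i ω.length with hiω | hiω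
  · exact ⟨_, List.getD_mem_of_lt hiω 0, h.lt_left i hiω⟩
  · have hω0 : 0 < ω.length := List.length_pos_iff.2 hω
    have hlast := h.lt_right (ω.length - 1) (by omega)
    rw [show ω.length - 1 + 1 = i by have := h.length_eq; omega] at hlast
    exact ⟨_, List.getD_mem_of_lt (by omega) 0, hlast⟩

theorem isPinnacleAt_interleave_append_iff (h : IsValleyList P ω d) {r : List ℕ}
    (hr : r.Pairwise (· < ·)) {t : ℕ} :
    IsPinnacleAt (interleave d ω ++ r) t ↔ ∃ i < ω.length, t = 2 * i + 1 := by
  have hlen : (interleave d ω).length = 2 * ω.length + 1 := by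
    rw [(interleave_perm h.length_eq).length_eq, List.length_append, h.length_eq]
    ring
  have heven := fun i => getD_interleave_append_two_mul r 0 (i := i) h.length_eq
  have hodd := fun i => getD_interleave_append_two_mul_add_one r 0 (i := i) h.length_eq
  constructor
  · intro ht
    rcases lt_or_ge t (2 * ω.length + 1) with htω | htr
    · obtain ⟨i, rfl | rfl⟩ := Nat.even_or_odd' t
      · have hi := ht.pos
        have hpred := ht.pred_lt
        rw [show 2 * i - 1 = 2 * (i - 1) + 1 by omega, hodd (i - 1) (by omega),
          heven i (by rw [h.length_eq]; omega)] at hpred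
        have := h.lt_right (i - 1) (by omega)
        rw [Nat.sub_add_cancel (by omega)] at this
        exact absurd hpred this.not_gt
      · exact ⟨i, by omega, rfl⟩
    · have hsucc := ht.succ_lt_length
      rw [List.length_append, hlen] at hsucc
      have hmono := hr.getD_getD (Nat.lt_succ_self (t - (2 * ω.length + 1))) (by omega) 0
      have hsucc' := ht.succ_lt
      rw [List.getD_append_right _ _ _ _ (by omega), List.getD_append_right _ _ _ _ (by omega),
        hlen, show t + 1 - (2 * ω.length + 1) = t - (2 * ω.length + 1) + 1 by omega] at hsucc'
      exact absurd hsucc' hmono.not_gt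
  · rintro ⟨i, hi, rfl⟩
    refine ⟨by omega, by rw [List.length_append, hlen]; omega, ?_, ?_⟩
    · rw [Nat.add_sub_cancel, heven i (by rw [h.length_eq]; omega), hodd i hi]
      exact h.lt_left i hi
    · rw [show 2 * i + 1 + 1 = 2 * (i + 1) by ring, heven (i + 1) (by rw [h.length_eq]; omega),
        hodd i hi]
      exact h.lt_right i hi

theorem pinSet_interleave_append (h : IsValleyList P ω d) {r : List ℕ}
    (hr : r.Pairwise (· < ·)) : pinSet (interleave d ω ++ r) = ω.toFinset := by
  ext v
  simp only [mem_pinSet_s5, h.isPinnacleAt_interleave_append_iff hr, List.mem_toFinset]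
  constructor
  · rintro ⟨_, ⟨i, hi, rfl⟩, rfl⟩
    rw [getD_interleave_append_two_mul_add_one r 0 h.length_eq hi]
    exact List.getD_mem_of_lt hi 0
  · intro hv
    obtain ⟨i, hi, rfl⟩ := List.getElem_of_mem hv
    refine ⟨2 * i + 1, ⟨i, hi, rfl⟩, ?_⟩
    rw [getD_interleave_append_two_mul_add_one r 0 h.length_eq hi, List.getD_eq_getElem]

theorem mem_admissibleOrderings {n : ℕ} (h : IsValleyList P ω d) (hP : P ⊆ Finset.Icc 1 n)
    (hω : ω.Nodup) (hωP : ω.toFinset = P) (hne : ω ≠ []) : ω ∈ admissibleOrderings n P := by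
  have hmemP : ∀ x, x ∈ ω ↔ x ∈ P := fun x => by rw [← hωP, List.mem_toFinset]
  have hωn : ∀ p ∈ ω, 1 ≤ p ∧ p ≤ n := fun p hp => Finset.mem_Icc.1 (hP ((hmemP p).1 hp))
  have hrange : ∀ x ∈ d ++ ω, x ∈ List.range' 1 n := by
    intro x hx
    rw [List.mem_range'_1]
    rcases List.mem_append.1 hx with hx | hx
    · obtain ⟨p, hp, hxp⟩ := h.exists_lt hne hx
      have := h.pos x hx
      have := hωn p hp
      omega
    · have := hωn x hx
      omega
  have hnodup : (d ++ ω).Nodup := List.nodup_append.2 ⟨h.nodup, hω,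
    fun x hx y hy hxy => h.not_mem x hx (hxy ▸ (hmemP y).1 hy)⟩
  set r := (List.range' 1 n).filter (· ∉ d ++ ω)
  refine ⟨hω, hωP, interleave d ω ++ r, ?_,
    hωP ▸ h.pinSet_interleave_append ((List.pairwise_lt_range' 1).filter _), ?_⟩
  · exact ((interleave_perm h.length_eq).append_right r).trans
      (List.perm_append_filter_notMem List.nodup_range' hnodup hrange)
  rw [ordIn, List.filter_append, filter_interleave _ h.length_eq, List.filter_eq_nil_iff.2,
    List.append_nil]
  · intro x hx
    simp only [r, List.mem_filter, List.mem_append, decide_eq_true_eq] at hx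
    simpa using fun hxP => hx.2 (Or.inr ((hmemP x).2 hxP))
  · simpa using h.not_mem
  · simp [← hmemP]

theorem map {Q : Finset ℕ} {g : ℕ → ℕ} (h : IsValleyList P ω d)
    (hinj : ∀ x ∈ d, ∀ y ∈ d, g x = g y → x = y) (hpos : ∀ x ∈ d, 0 < g x)
    (hQ : ∀ x ∈ d, g x ∉ Q) (hlt : ∀ x ∈ d, ∀ p ∈ ω, x < p → g x < g p) :
    IsValleyList Q (ω.map g) (d.map g) where
  length_eq := by simp [h.length_eq]
  nodup := h.nodup.map_on hinj
  pos := by simpa using hpos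
  not_mem := by simpa using hQ
  lt_left i hi := by
    rw [List.length_map] at hi
    have hid : i < d.length := by rw [h.length_eq]; omega
    rw [List.getD_map_of_lt g hid 0, List.getD_map_of_lt g hi 0]
    exact hlt _ (List.getD_mem_of_lt hid 0) _ (List.getD_mem_of_lt hi 0) (h.lt_left i hi)
  lt_right i hi := by
    rw [List.length_map] at hi
    have hid : i + 1 < d.length := by rw [h.length_eq]; omega
    rw [List.getD_map_of_lt g hid 0, List.getD_map_of_lt g hi 0]
    exact hlt _ (List.getD_mem_of_lt hid 0) _ (List.getD_mem_of_lt hi 0) (h.lt_right i hi)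

theorem exists_subset {N : Finset ℕ} (h : IsValleyList P ω d) (hωP : ∀ p ∈ ω, p ∈ P)
    (hN : N.card = ω.length + 1) (hNpos : ∀ m ∈ N, 0 < m) (hNP : ∀ m ∈ N, m ∉ P)
    (hNsmall : ∀ m, 0 < m → m ∉ P → m ∉ N → ∀ m' ∈ N, m' < m) :
    ∃ d', IsValleyList P ω d' ∧ ∀ x ∈ d', x ∈ N := by
  have hD : ∀ x, x ∈ d ↔ x ∈ d.toFinset := fun x => List.mem_toFinset.symm
  obtain ⟨f, hfinj, hfN, hfid⟩ := Finset.exists_injOn_le_of_card_eq (D := d.toFinset) (N := N)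
    (by rw [List.toFinset_card_of_nodup h.nodup, h.length_eq, hN])
    (fun x hx hxN => hNsmall x (h.pos x ((hD x).2 hx)) (h.not_mem x ((hD x).2 hx)) hxN)
  have hfω : ∀ p ∈ ω, f p = p := fun p hp =>
    hfid p fun hpd => h.not_mem p ((hD p).2 hpd) (hωP p hp)
  refine ⟨d.map f, ?_, by simpa using fun x hx => (hfN x ((hD x).1 hx)).1⟩
  have hmap := h.map (fun x hx y hy => hfinj ((hD x).1 hx) ((hD y).1 hy))
    (fun x hx => hNpos _ (hfN x ((hD x).1 hx)).1) (fun x hx => hNP _ (hfN x ((hD x).1 hx)).1)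
    (fun x hx p hp hxp => (hfω p hp).symm ▸ (hfN x ((hD x).1 hx)).2.trans_lt hxp)
  rwa [(List.map_congr_left hfω).trans ω.map_id] at hmap

end IsValleyList

theorem mem_admissibleOrderings_iff {n : ℕ} {P : Finset ℕ} {ω : List ℕ}
    (hP : P ⊆ Finset.Icc 1 n) (hne : P.Nonempty) :
    ω ∈ admissibleOrderings n P ↔ ω.Nodup ∧ ω.toFinset = P ∧ ∃ d, IsValleyList P ω d := by
  refine ⟨fun h => ⟨h.1, h.2.1, exists_isValleyList_of_mem_admissibleOrderings hne h⟩, ?_⟩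
  rintro ⟨hω, hωP, d, hd⟩
  refine hd.mem_admissibleOrderings hP hω hωP ?_
  rintro rfl
  exact hne.ne_empty hωP.symm

theorem admissibleOrderings_empty (n : ℕ) : admissibleOrderings n ∅ = {[]} := by
  ext ω
  refine ⟨fun h => (List.toFinset_eq_empty_iff ω).1 h.2.1, ?_⟩
  rintro rfl
  refine ⟨List.nodup_nil, rfl, List.range' 1 n, List.Perm.refl _, ?_, by simp [ordIn]⟩
  refine Finset.eq_empty_of_forall_notMem fun v hv => ?_
  obtain ⟨t, ht, -⟩ := mem_pinSet_s5.1 hv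
  exact not_isPinnacleAt_of_pairwise (List.pairwise_lt_range' 1) t ht

section standardization

structure IsStandardization (k : ℕ) (P N : Finset ℕ) (σ : ℕ → ℕ) : Prop where
  card_eq : N.card = k + 1
  pos : ∀ m ∈ N, 0 < m
  not_mem : ∀ m ∈ N, m ∉ P
  lt_of_notMem : ∀ m, 0 < m → m ∉ P → m ∉ N → ∀ m' ∈ N, m' < m
  bijOn : Set.BijOn σ ↑(P ∪ N) ↑(Finset.Icc 1 (2 * k + 1))
  strictMonoOn : ∀ a ∈ P ∪ N, ∀ b ∈ P ∪ N, a < b → σ a < σ b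

variable {k : ℕ} {P N P' : Finset ℕ} {σ : ℕ → ℕ}

namespace IsStandardization

theorem isValleyList_map (hσ : IsStandardization k P N σ) (hP' : P' = P.image σ) {ω d : List ℕ}
    (hd : IsValleyList P ω d) (hωP : ∀ p ∈ ω, p ∈ P) (hdN : ∀ x ∈ d, x ∈ N) :
    IsValleyList P' (ω.map σ) (d.map σ) := by
  have hdPN : ∀ x ∈ d, x ∈ P ∪ N := fun x hx => Finset.mem_union_right P (hdN x hx)
  refine hd.map (fun x hx y hy => hσ.bijOn.injOn (hdPN x hx) (hdPN y hy))
    (fun x hx => (Finset.mem_Icc.1 (hσ.bijOn.mapsTo (hdPN x hx))).1) (fun x hx hxP' => ?_)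
    (fun x hx p hp => hσ.strictMonoOn x (hdPN x hx) p (Finset.mem_union_left N (hωP p hp)))
  obtain ⟨p, hp, hpx⟩ := Finset.mem_image.1 (hP' ▸ hxP')
  exact hσ.not_mem x (hdN x hx)
    (hσ.bijOn.injOn (Finset.mem_union_left N hp) (hdPN x hx) hpx ▸ hp)

theorem exists_isValleyList_of_map (hσ : IsStandardization k P N σ) (hP' : P' = P.image σ)
    {ω d' : List ℕ} (hd' : IsValleyList P' (ω.map σ) d') (hωP : ∀ p ∈ ω, p ∈ P) (hne : ω ≠ []) :
    ∃ d, IsValleyList P ω d := by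
  have hP : ∀ p ∈ P, p ∈ P ∪ N := fun p => Finset.mem_union_left N
  set τ := Function.invFunOn σ ↑(P ∪ N)
  have hτ : ∀ x ∈ d', τ x ∈ N ∧ σ (τ x) = x := by
    intro x hx
    obtain ⟨_, hq, hxq⟩ := hd'.exists_lt (by simpa using hne) hx
    obtain ⟨p, hp, rfl⟩ := List.mem_map.1 hq
    have hσp := Finset.mem_Icc.1 (hσ.bijOn.mapsTo (hP p (hωP p hp)))
    have hex := hσ.bijOn.surjOn (by
      simp only [Finset.coe_Icc, Set.mem_Icc]
      exact ⟨hd'.pos x hx, by omega⟩ : x ∈ (↑(Finset.Icc 1 (2 * k + 1)) : Set ℕ))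
    have hστ : σ (τ x) = x := Function.invFunOn_eq hex
    refine ⟨(Finset.mem_union.1 (Function.invFunOn_mem hex)).resolve_left fun hτP => ?_, hστ⟩
    exact hd'.not_mem x hx (hστ ▸ hP' ▸ Finset.mem_image_of_mem σ hτP)
  have hmap := hd'.map (g := τ) (Q := P)
    (fun x hx y hy hxy => (hτ x hx).2.symm.trans ((congrArg σ hxy).trans (hτ y hy).2))
    (fun x hx => hσ.pos _ (hτ x hx).1) (fun x hx => hσ.not_mem _ (hτ x hx).1) ?_
  · rw [List.map_invFunOn_map hσ.bijOn.injOn fun p hp => hP p (hωP p hp)] at hmap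
    exact ⟨_, hmap⟩
  intro x hx _ hq hxp
  obtain ⟨p, hp, rfl⟩ := List.mem_map.1 hq
  rw [show τ (σ p) = p from hσ.bijOn.injOn.leftInvOn_invFunOn (hP p (hωP p hp))]
  by_contra! hpx
  have hpτ : p ≠ τ x := fun h => hσ.not_mem _ (hτ x hx).1 (h ▸ hωP p hp)
  have := hσ.strictMonoOn p (hP p (hωP p hp)) (τ x) (Finset.mem_union_right P (hτ x hx).1)
    (lt_of_le_of_ne hpx hpτ)
  rw [(hτ x hx).2] at this
  exact absurd hxp this.not_gt

theorem exists_isValleyList_map_iff (hσ : IsStandardization k P N σ) (hP' : P' = P.image σ)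
    {ω : List ℕ} (hωP : ∀ p ∈ ω, p ∈ P) (hωk : ω.length = k) (hne : ω ≠ []) :
    (∃ d, IsValleyList P' (ω.map σ) d) ↔ ∃ d, IsValleyList P ω d := by
  refine ⟨fun ⟨d', hd'⟩ => hσ.exists_isValleyList_of_map hP' hd' hωP hne, fun ⟨d, hd⟩ => ?_⟩
  obtain ⟨d₁, hd₁, hd₁N⟩ :=
    hd.exists_subset hωP (hωk ▸ hσ.card_eq) hσ.pos hσ.not_mem hσ.lt_of_notMem
  exact ⟨_, hσ.isValleyList_map hP' hd₁ hωP hd₁N⟩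

theorem map_mem_admissibleOrderings_iff (hσ : IsStandardization k P N σ) (hP' : P' = P.image σ)
    {n : ℕ} (hP : P ⊆ Finset.Icc 1 n) (hk : P.card = k) (hk0 : 0 < k)
    {ω : List ℕ} (hωP : ∀ p ∈ ω, p ∈ P) :
    ω.map σ ∈ admissibleOrderings (2 * k + 1) P' ↔ ω ∈ admissibleOrderings n P := by
  have hinj : Set.InjOn σ ↑P := hσ.bijOn.injOn.mono (by simp)
  have hPne : P.Nonempty := Finset.card_pos.1 (hk ▸ hk0)
  have hP'sub : P' ⊆ Finset.Icc 1 (2 * k + 1) := by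
    rw [hP']
    intro x hx
    obtain ⟨p, hp, rfl⟩ := Finset.mem_image.1 hx
    exact hσ.bijOn.mapsTo (Finset.mem_union_left N hp)
  rw [mem_admissibleOrderings_iff hP'sub (hP' ▸ hPne.image σ), mem_admissibleOrderings_iff hP hPne]
  have hnodup : (ω.map σ).Nodup ↔ ω.Nodup :=
    ⟨List.Nodup.of_map σ, List.Nodup.map_on fun x hx y hy => hinj (hωP x hx) (hωP y hy)⟩
  have htoFinset : (ω.map σ).toFinset = P' ↔ ω.toFinset = P := by
    have : (ω.map σ).toFinset = ω.toFinset.image σ := by ext; simp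
    rw [this, hP', Finset.image_eq_image_iff_of_injOn hinj
      (fun x hx => hωP x (List.mem_toFinset.1 hx)) subset_rfl]
  rw [hnodup, htoFinset]
  refine and_congr_right fun hω => and_congr_right fun hωP' => ?_
  have hωk : ω.length = k := by rw [← List.toFinset_card_of_nodup hω, hωP', hk]
  exact hσ.exists_isValleyList_map_iff hP' hωP hωk (List.ne_nil_of_length_pos (hωk ▸ hk0))

theorem bijOn_map_admissibleOrderings (hσ : IsStandardization k P N σ) (hP' : P' = P.image σ)
    {n : ℕ} (hP : P ⊆ Finset.Icc 1 n) (hk : P.card = k) (hk0 : 0 < k) :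
    Set.BijOn (List.map σ) (admissibleOrderings n P) (admissibleOrderings (2 * k + 1) P') := by
  have hinj : Set.InjOn σ ↑P := hσ.bijOn.injOn.mono (by simp)
  have hmem : ∀ ω ∈ admissibleOrderings n P, ∀ p ∈ ω, p ∈ P :=
    fun ω hω p hp => hω.2.1 ▸ List.mem_toFinset.2 hp
  have hiff {ω} := hσ.map_mem_admissibleOrderings_iff hP' (ω := ω) hP hk hk0
  refine ⟨fun ω hω => (hiff (hmem ω hω)).2 hω, fun ω₁ h₁ ω₂ h₂ h => ?_, fun ω' hω' => ?_⟩
  · rw [← List.map_invFunOn_map hinj (hmem ω₁ h₁), h, List.map_invFunOn_map hinj (hmem ω₂ h₂)]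
  · have hσP : ∀ x ∈ ω', ∃ p ∈ P, σ p = x := fun x hx => by
      rw [← Finset.mem_image, ← hP', ← hω'.2.1, List.mem_toFinset]
      exact hx
    set ω := ω'.map (Function.invFunOn σ ↑P)
    have hωP : ∀ p ∈ ω, p ∈ P := by
      intro p hp
      obtain ⟨x, hx, rfl⟩ := List.mem_map.1 hp
      exact Function.invFunOn_mem (hσP x hx)
    have hωω' : ω.map σ = ω' := by
      rw [List.map_map]
      exact (List.map_congr_left fun x hx => Function.invFunOn_eq (hσP x hx)).trans ω'.map_id
    exact ⟨ω, (hiff hωP).1 (hωω' ▸ hω'), hωω'⟩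

end IsStandardization

end standardization

theorem ordering_standardization (n k : ℕ) (P : Finset ℕ)
    (hP : P ⊆ Finset.Icc 1 n) (hk : P.card = k)
    (N : Finset ℕ) (hNcard : N.card = k + 1) (hNpos : ∀ m ∈ N, 1 ≤ m)
    (hNP : ∀ m ∈ N, m ∉ P)
    (hNsmall : ∀ m : ℕ, 1 ≤ m → m ∉ P → m ∉ N → ∀ m' ∈ N, m' < m)
    (σ : ℕ → ℕ) (hσbij : Set.BijOn σ ↑(P ∪ N) ↑(Finset.Icc 1 (2 * k + 1)))
    (hσmono : ∀ a ∈ P ∪ N, ∀ b ∈ P ∪ N, a < b → σ a < σ b)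
    (P' : Finset ℕ) (hP' : P' = P.image σ) :
    (admissibleOrderings n P).ncard = (admissibleOrderings (2 * k + 1) P').ncard := by
  rcases Nat.eq_zero_or_pos k with rfl | hk0
  · obtain rfl := Finset.card_eq_zero.1 hk
    rw [hP', Finset.image_empty, admissibleOrderings_empty, admissibleOrderings_empty]
  have hσ : IsStandardization k P N σ := ⟨hNcard, hNpos, hNP, hNsmall, hσbij, hσmono⟩
  exact (hσ.bijOn_map_admissibleOrderings hP' hP hk hk0).ncard_eq
end

section
/- Let k ≥ 1, n = 2k + 1, P = {p_1 < ⋯ < p_k} ⊆ [n], and 0 ≤ i < p_1 (so that N_i = {1, …, i}). If ω ∈ O_i(P) and ω' is a sequence obtained from ω by permuting the entries belonging to {1, …, i} among their positions (that is, ω' agrees with ω at every position whose entry does not lie in {1, …, i}, and the entries of ω' at the remaining positions form a permutation of {1, …, i}), then ω' ∈ O_i(P). -/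
/-- `Oset k P i` is `O_i(P)`: the set of orderings `ω` of `P ∪ N_i` (where, assuming
`i` is smaller than every element of `P`, `N_i = {1, …, i}` is the set of the `i` smallest
positive integers not in `P`) such that some permutation `π` of `{1, …, 2k+1}` has
pinnacle set `P` and the entries of `P ∪ N_i` appear in `π` in the order `ω`. -/
def Oset (k : ℕ) (P : Finset ℕ) (i : ℕ) : Set (List ℕ) :=
  {ω | ω.Nodup ∧ ω.toFinset = P ∪ Finset.Icc 1 i ∧
    ∃ π : List ℕ, π.Perm (List.range' 1 (2 * k + 1)) ∧ pinSet π = P ∧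
      ordIn (P ∪ Finset.Icc 1 i) π = ω}

/-- `adjCount ω v S` is the number of entries of `ω` lying in `S` that are adjacent in `ω`
to the entry equal to `v`. -/
def adjCount (ω : List ℕ) (v : ℕ) (S : Finset ℕ) : ℕ :=
  ((List.range ω.length).filter (fun t =>
    decide (ω.getD t 0 ∈ S ∧
      ((1 ≤ t ∧ ω.getD (t - 1) 0 = v) ∨ (t + 1 < ω.length ∧ ω.getD (t + 1) 0 = v))))).length

/-- `Ojset k P p1 i j` is `O_i^j(P)`: those orderings in `O_i(P)` in which the entry equal
to `p1` (the smallest element of `P`) is adjacent to exactly `j` entries lying in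
`N_i = {1, …, i}`. -/
def Ojset (k : ℕ) (P : Finset ℕ) (p1 i j : ℕ) : Set (List ℕ) :=
  {ω | ω ∈ Oset k P i ∧ adjCount ω p1 (Finset.Icc 1 i) = j}

/-!
A permutation of `[2k+1]` with `k` pinnacles has them at positions `2, 4, …, 2k`, since
pinnacle positions are interior and pairwise non-adjacent. Hence every entry `≤ i` (none of
which is a pinnacle, as `i < p₁`) is flanked by pinnacles only, so its value is irrelevant to
the pinnacle pattern as long as it stays `≤ i`. If `π` witnesses `ω ∈ O_i(P)`, relabelling the
small values of `π` by the injection `ω ↦ ω'` gives a witness for `ω'`.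
-/

lemma Finset.card_le_of_subset_Ico_of_succ_notMem {S : Finset ℕ} {a b : ℕ}
    (hS : S ⊆ Finset.Ico a b) (hsucc : ∀ x ∈ S, x + 1 ∉ S) : S.card ≤ (b - a + 1) / 2 := by
  calc S.card ≤ (Finset.range ((b - a + 1) / 2)).card := by
        refine Finset.card_le_card_of_injOn (fun x => (x - a) / 2) ?_ ?_
        · intro x hx
          have := Finset.mem_Ico.1 (hS hx)
          simp only [Finset.coe_range, Set.mem_Iio]
          omega
        · intro x hx y hy hxy
          simp only at hxy
          have := Finset.mem_Ico.1 (hS hx)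
          have := Finset.mem_Ico.1 (hS hy)
          by_contra hne
          rcases Nat.lt_or_gt_of_ne hne with h | h
          · exact hsucc x hx (by rwa [show x + 1 = y by omega])
          · exact hsucc y hy (by rwa [show y + 1 = x by omega])
    _ = (b - a + 1) / 2 := Finset.card_range _

def pinPositions (w : List ℕ) : Finset ℕ :=
  (Finset.range w.length).filter fun t =>
    0 < t ∧ t + 1 < w.length ∧ w.getD (t - 1) 0 < w.getD t 0 ∧ w.getD (t + 1) 0 < w.getD t 0

lemma pinSet_eq_image_pinPositions (w : List ℕ) :
    pinSet w = (pinPositions w).image (w.getD · 0) := by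
  ext x
  simp [pinSet, pinPositions]

lemma pinPositions_subset_Ico (w : List ℕ) : pinPositions w ⊆ Finset.Ico 1 (w.length - 1) := by
  intro t ht
  simp only [pinPositions, Finset.mem_filter, Finset.mem_range] at ht
  simp only [Finset.mem_Ico]
  omega

lemma succ_notMem_pinPositions {w : List ℕ} {t : ℕ} (ht : t ∈ pinPositions w) :
    t + 1 ∉ pinPositions w := by
  simp only [pinPositions, Finset.mem_filter, Finset.mem_range, Nat.add_sub_cancel] at ht ⊢
  omega

lemma mem_pinPositions_or_succ {w : List ℕ} {k : ℕ} (hlen : w.length = 2 * k + 1)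
    (hcard : k ≤ (pinSet w).card) {t : ℕ} (ht : t + 1 < w.length) :
    t ∈ pinPositions w ∨ t + 1 ∈ pinPositions w := by
  by_contra! hgap
  set T := pinPositions w
  have hT : k ≤ T.card :=
    hcard.trans (pinSet_eq_image_pinPositions w ▸ Finset.card_image_le)
  have hsplit : T ⊆ T.filter (· < t) ∪ T.filter (t + 1 < ·) := by
    intro s hs
    have : s ≠ t ∧ s ≠ t + 1 := ⟨fun h => hgap.1 (h ▸ hs), fun h => hgap.2 (h ▸ hs)⟩
    simp only [Finset.mem_union, Finset.mem_filter, hs, true_and]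
    omega
  have hsub {p : ℕ → Prop} [DecidablePred p] {a b : ℕ} (h : ∀ s ∈ T, p s → a ≤ s ∧ s < b) :
      (T.filter p).card ≤ (b - a + 1) / 2 :=
    Finset.card_le_of_subset_Ico_of_succ_notMem
      (fun s hs => Finset.mem_Ico.2 (h s (Finset.mem_filter.1 hs).1 (Finset.mem_filter.1 hs).2))
      (fun s hs hs' => succ_notMem_pinPositions (Finset.mem_filter.1 hs).1
        (Finset.mem_filter.1 hs').1)
  have hleft := hsub (p := (· < t)) (a := 1) (b := t) fun s hs hst =>
    ⟨(Finset.mem_Ico.1 (pinPositions_subset_Ico w hs)).1, hst⟩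
  have hright := hsub (p := (t + 1 < ·)) (a := t + 2) (b := 2 * k) fun s hs hst =>
    ⟨hst, by have := (Finset.mem_Ico.1 (pinPositions_subset_Ico w hs)).2; omega⟩
  have := (Finset.card_le_card hsplit).trans (Finset.card_union_le _ _)
  omega

lemma List.Perm.exists_injective_map_eq {α : Type*} [DecidableEq α] {l l' : List α}
    (hperm : l'.Perm l) (hnd : l.Nodup) {p : α → Prop} (d : α)
    (hagree : ∀ t < l.length, ¬ p (l.getD t d) → l'.getD t d = l.getD t d) :
    ∃ f : α → α, f.Injective ∧ (∀ x, ¬ p x → f x = x) ∧ l.map f = l' := by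
  have hlen := hperm.length_eq
  have hnd' := hperm.nodup_iff.2 hnd
  have hidx {x} (hx : x ∈ l) : l.idxOf x < l'.length := hlen ▸ List.idxOf_lt_length_of_mem hx
  refine ⟨fun x => if hx : x ∈ l then l'[l.idxOf x]'(hidx hx) else x, ?_, ?_, ?_⟩
  · have hmem {x} (hx : x ∈ l) : l'[l.idxOf x]'(hidx hx) ∈ l := hperm.subset (List.getElem_mem _)
    intro x y hxy
    by_cases hx : x ∈ l <;> by_cases hy : y ∈ l <;> simp only [hx, hy, dite_true, dite_false] at hxy
    · rw [← List.getElem_idxOf (List.idxOf_lt_length_of_mem hx),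
        ← List.getElem_idxOf (List.idxOf_lt_length_of_mem hy)]
      simp only [(hnd'.getElem_inj_iff).1 hxy]
    · exact absurd (hxy ▸ hmem hx) hy
    · exact absurd (hxy ▸ hmem hy) hx
    · exact hxy
  · intro x hpx
    dsimp only
    split_ifs with hx
    · have ht := List.idxOf_lt_length_of_mem hx
      have hget : l.getD (l.idxOf x) d = x := by rw [List.getD_eq_getElem _ _ ht, List.getElem_idxOf]
      have := hagree _ ht (by rwa [hget])
      rwa [hget, List.getD_eq_getElem _ _ (hlen ▸ ht)] at this
    · rfl
  · refine List.ext_getElem (by simp [hlen]) fun t ht _ => ?_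
    simp [hnd.idxOf_getElem]

lemma Function.Injective.apply_iff_of_forall_not {α : Type*} {f : α → α} (hf : f.Injective)
    {p : α → Prop} (hfix : ∀ x, ¬ p x → f x = x) (x : α) : p (f x) ↔ p x := by
  by_cases hx : p x
  · refine iff_of_true (by_contra fun hfx => ?_) hx
    exact hfx ((hf (hfix _ hfx)).symm ▸ hx)
  · rw [hfix x hx]

lemma List.Nodup.map_perm_self {α : Type*} {l : List α} {f : α → α} (hnd : l.Nodup)
    (hf : f.Injective) (hmaps : ∀ x ∈ l, f x ∈ l) : (l.map f).Perm l :=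
  ((hnd.map hf).subperm fun y hy => by
    obtain ⟨x, hx, rfl⟩ := List.mem_map.1 hy
    exact hmaps x hx).perm_of_length_le (by simp)

lemma getD_map_of_lt {w : List ℕ} (f : ℕ → ℕ) {t : ℕ} (ht : t < w.length) :
    (w.map f).getD t 0 = f (w.getD t 0) := by
  rw [List.getD_eq_getElem _ _ (by simpa using ht), List.getD_eq_getElem _ _ ht,
    List.getElem_map]

lemma pinPositions_map_eq {w : List ℕ} {f : ℕ → ℕ} {m : ℕ} (hfix : ∀ x, m < x → f x = x)
    (hsmall : ∀ x ≤ m, f x ≤ m)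
    (hsep : ∀ t, t + 1 < w.length → m < w.getD t 0 ∨ m < w.getD (t + 1) 0) :
    pinPositions (w.map f) = pinPositions w := by
  ext t
  simp only [pinPositions, Finset.mem_filter, Finset.mem_range, List.length_map]
  refine and_congr_right fun ht => ?_
  by_cases hint : 0 < t ∧ t + 1 < w.length
  · obtain ⟨h0, h1⟩ := hint
    rw [getD_map_of_lt f (by omega : t - 1 < w.length), getD_map_of_lt f ht,
      getD_map_of_lt f h1]
    have hl := hsep (t - 1) (by omega)
    rw [Nat.sub_add_cancel h0] at hl
    have hr := hsep t h1
    set a := w.getD (t - 1) 0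
    set b := w.getD t 0
    set c := w.getD (t + 1) 0
    have key (v : ℕ) : (m < v ∧ f v = v) ∨ (v ≤ m ∧ f v ≤ m) := by
      rcases Nat.lt_or_ge m v with h | h
      · exact Or.inl ⟨h, hfix v h⟩
      · exact Or.inr ⟨h, hsmall v h⟩
    rcases key a with ⟨_, _⟩ | ⟨_, _⟩ <;> rcases key b with ⟨_, _⟩ | ⟨_, _⟩ <;>
      rcases key c with ⟨_, _⟩ | ⟨_, _⟩ <;> simp only [h0, h1, true_and] <;> omega
  · simp only [not_and_or] at hint
    tauto

lemma pinSet_map_eq {w : List ℕ} {f : ℕ → ℕ} {m : ℕ} (hfix : ∀ x, m < x → f x = x)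
    (hsmall : ∀ x ≤ m, f x ≤ m)
    (hsep : ∀ t, t + 1 < w.length → m < w.getD t 0 ∨ m < w.getD (t + 1) 0) :
    pinSet (w.map f) = pinSet w := by
  rw [pinSet_eq_image_pinPositions, pinSet_eq_image_pinPositions,
    pinPositions_map_eq hfix hsmall hsep]
  refine Finset.image_congr fun t ht => ?_
  simp only [pinPositions, Finset.mem_coe, Finset.mem_filter, Finset.mem_range] at ht
  obtain ⟨ht, h0, h1, hl, -⟩ := ht
  have hsep' := hsep (t - 1) (by omega)
  rw [Nat.sub_add_cancel h0] at hsep'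
  rw [getD_map_of_lt f ht, hfix _ (by omega)]

lemma lt_getD_or_lt_getD_succ_of_pinSet_eq {w : List ℕ} {k i : ℕ} {P : Finset ℕ}
    (hlen : w.length = 2 * k + 1) (hpin : pinSet w = P) (hcard : P.card = k)
    (hi : ∀ q ∈ P, i < q) {t : ℕ} (ht : t + 1 < w.length) :
    i < w.getD t 0 ∨ i < w.getD (t + 1) 0 := by
  have hval {s} (hs : s ∈ pinPositions w) : i < w.getD s 0 :=
    hi _ (hpin ▸ pinSet_eq_image_pinPositions w ▸ Finset.mem_image_of_mem _ hs)
  exact (mem_pinPositions_or_succ hlen (by rw [hpin, hcard]) ht).imp hval hval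

theorem swap_small_elements_general (k i : ℕ) (P : Finset ℕ)
    (hcard : P.card = k)
    (hi : ∀ q ∈ P, i < q)
    (ω ω' : List ℕ) (hω : ω ∈ Oset k P i)
    (hagree : ∀ t < ω.length, ω.getD t 0 ∉ Finset.Icc 1 i → ω'.getD t 0 = ω.getD t 0)
    (hperm : ω'.Perm ω) :
    ω' ∈ Oset k P i := by
  obtain ⟨hnd, hset, π, hπ, hpin, hord⟩ := hω
  obtain ⟨f, hf, hfix, hmap⟩ := hperm.exists_injective_map_eq hnd 0 hagree
  have hfIcc := hf.apply_iff_of_forall_not hfix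
  have hfP (x : ℕ) : f x ∈ P ∪ Finset.Icc 1 i ↔ x ∈ P ∪ Finset.Icc 1 i := by
    by_cases hx : x ∈ Finset.Icc 1 i
    · simp only [Finset.mem_union, hx, (hfIcc x).2 hx, or_true]
    · rw [hfix x hx]
  have hπf : (π.map f).Perm π := by
    refine (hπ.nodup_iff.2 List.nodup_range').map_perm_self hf fun x hx => ?_
    by_cases hx' : x ∈ Finset.Icc 1 i
    · have hxω : x ∈ ω := hord ▸ List.mem_filter.2 ⟨hx, by simp [hx']⟩
      have hfx : f x ∈ ω := hperm.subset (hmap ▸ List.mem_map_of_mem hxω)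
      exact (List.mem_filter.1 (hord ▸ hfx)).1
    · rwa [hfix x hx']
  have hπlen : π.length = 2 * k + 1 := by simpa using hπ.length_eq
  refine ⟨hperm.nodup_iff.2 hnd, (List.toFinset_eq_of_perm _ _ hperm).trans hset,
    π.map f, hπf.trans hπ, ?_, ?_⟩
  · rw [← hpin]
    refine pinSet_map_eq (m := i) (fun x hx => hfix x (by rw [Finset.mem_Icc]; omega)) (fun x hx => ?_)
      fun t ht => lt_getD_or_lt_getD_succ_of_pinSet_eq hπlen hpin hcard hi ht
    rcases Nat.eq_zero_or_pos x with rfl | hx0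
    · rw [hfix 0 (by simp)]; omega
    · exact (Finset.mem_Icc.1 ((hfIcc x).2 (Finset.mem_Icc.2 ⟨hx0, hx⟩))).2
  · rw [ordIn, List.filter_map, ← hmap, ← hord, ordIn]
    congr 1
    exact List.filter_congr fun x _ => by simp only [Function.comp, hfP]

theorem swap_small_elements (k i : ℕ) (hk : 1 ≤ k) (P : Finset ℕ)
    (hP : P ⊆ Finset.Icc 1 (2 * k + 1)) (hcard : P.card = k)
    (hi : ∀ q ∈ P, i < q)
    (ω ω' : List ℕ) (hω : ω ∈ Oset k P i)
    (hlen : ω'.length = ω.length)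
    (hagree : ∀ t < ω.length, ω.getD t 0 ∉ Finset.Icc 1 i → ω'.getD t 0 = ω.getD t 0)
    (hperm : ω'.Perm ω) :
    ω' ∈ Oset k P i :=
  swap_small_elements_general k i P hcard hi ω ω' hω hagree hperm
end
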